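/- arXiv:1508.02964 — 8 statements merged into one kernel-verified Lean document; each statement's English description precedes it below -/
import Mathlib

section
/- Let w be a binary word starting with 0 that avoids factors 000 and 111, with canonical factorization w = A_0 a_1 a_1 A_1 ... a_k a_k A_k and associated sequence f(w) = (n_0,...,n_k) where n_0 = |A_0 a_1|, n_i = |a_i A_i a_{i+1}| for 0 < i < k, and n_k = |a_k A_k|. If there exists an index j with n_{j-1} ≥ n_j and n_j ≤ n_{j+1}, then w contains an instance of the pattern xx^Rx. -/
/-- A binary word avoids the pattern `x xᴿ x`: no factor `u ++ u.reverse ++ u` with `u` nonempty. -/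
def AvoidsP (w : List Bool) : Prop :=
  ¬ ∃ u : List Bool, u ≠ [] ∧ (u ++ u.reverse ++ u) <:+: w

/-- A binary word avoids the factors `000` and `111`. -/
def AvoidsCubes (w : List Bool) : Prop :=
  ¬ ([false, false, false] <:+: w) ∧ ¬ ([true, true, true] <:+: w)

/-- Alternating word: a prefix of `0101…` or `1010…`. -/
def Alt (A : List Bool) : Prop := A.Chain' (· ≠ ·)

/-- Glue the blocks `A_0 a_1 a_1 A_1 a_2 a_2 ⋯ a_k a_k A_k`. -/
def glue : List (List Bool) → List Bool → List Bool
  | [], _ => []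
  | [A], _ => A
  | A :: As, [] => A ++ glue As []
  | A :: As, b :: bs => A ++ [b, b] ++ glue As bs

/-- `IsFact As bs w` : `w = A_0 b_1 b_1 A_1 ⋯ b_k b_k A_k` with all `A_i` alternating. -/
def IsFact (As : List (List Bool)) (bs : List Bool) (w : List Bool) : Prop :=
  As.length = bs.length + 1 ∧ (∀ A ∈ As, Alt A) ∧ w = glue As bs

/-- Middle and final entries of the associated sequence: `n_i = |a_i A_i a_{i+1}|`, `n_k = |a_k A_k|`. -/
def seqMid : List (List Bool) → List ℕ
  | [] => []
  | [A] => [A.length + 1]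
  | A :: As => (A.length + 2) :: seqMid As

/-- The sequence `f(w) = (n_0, …, n_k)` associated to the canonical factorization. -/
def seqOf : List (List Bool) → List ℕ
  | [] => []
  | [A] => if A.isEmpty then [] else [A.length]
  | A :: As => (A.length + 1) :: seqMid As

/-- No index `j` with `d_{j-1} ≥ d_j` and `d_j ≤ d_{j+1}`. -/
def NoValley (d : List ℕ) : Prop :=
  ∀ j : ℕ, 1 ≤ j → j + 1 < d.length →
    ¬ (d.getD (j - 1) 0 ≥ d.getD j 0 ∧ d.getD j 0 ≤ d.getD (j + 1) 0)

/-- Membership in the set `X` of sequences. -/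
def InX (d : List ℕ) : Prop := (∀ x ∈ d, 0 < x) ∧ NoValley d

/-- Type 1 (strongly unimodal): strictly increasing to a unique maximum, then strictly decreasing. -/
def Type1 (d : List ℕ) : Prop :=
  (∀ x ∈ d, 0 < x) ∧ d ≠ [] ∧ ∃ j < d.length,
    (∀ i : ℕ, i + 1 ≤ j → d.getD i 0 < d.getD (i + 1) 0) ∧
    (∀ i : ℕ, j ≤ i → i + 1 < d.length → d.getD i 0 > d.getD (i + 1) 0)

/-- Type 2: strictly increasing, two equal consecutive maximal terms, then strictly decreasing. -/
def Type2 (d : List ℕ) : Prop :=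
  (∀ x ∈ d, 0 < x) ∧ ∃ j, 1 ≤ j ∧ j < d.length ∧
    d.getD (j - 1) 0 = d.getD j 0 ∧
    (∀ i : ℕ, i + 1 ≤ j - 1 → d.getD i 0 < d.getD (i + 1) 0) ∧
    (∀ i : ℕ, j ≤ i → i + 1 < d.length → d.getD i 0 > d.getD (i + 1) 0)

/-- `v n` : number of sequences in `X` of weight `n`. -/
noncomputable def v (n : ℕ) : ℕ := Nat.card {d : List ℕ // InX d ∧ d.sum = n}

/-- A strict partition, viewed as a finite set of positive integers. -/
def StrictPartition (s : Finset ℕ) : Prop := 0 ∉ s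

/-- `utilde n` : number of pairs of partitions into distinct parts of total weight `n`. -/
noncomputable def utilde (n : ℕ) : ℕ :=
  Nat.card {p : Finset ℕ × Finset ℕ //
    StrictPartition p.1 ∧ StrictPartition p.2 ∧ p.1.sum id + p.2.sum id = n}

/-- `c n` : number of binary words of length `n` avoiding `x xᴿ x`. -/
noncomputable def c (n : ℕ) : ℕ := Nat.card {w : List Bool // w.length = n ∧ AvoidsP w}

/-- The word `(01)^n`. -/
def w01 (n : ℕ) : List Bool := (List.replicate n [false, true]).flatten

/-- The word `(10)^n`. -/
def w10 (n : ℕ) : List Bool := (List.replicate n [true, false]).flatten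

/-!
Cutting `w = A_0 a_1 a_1 A_1 ⋯ a_k a_k A_k` between the two letters of each pair `a_i a_i`
gives `w = B_0 B_1 ⋯ B_k` with `B_0 = A_0 a_1`, `B_i = a_i A_i a_{i+1}`, `B_k = a_k A_k`, so
`|B_i| = n_i`. Since `w` avoids `000` and `111`, every block `B_i` is alternating, and `B_i`
ends with the letter `B_{i+1}` starts with. An alternating word is determined by its length and
first letter, so at a valley `n_{j-1} ≥ n_j ≤ n_{j+1}` the last `n_j` letters of `B_{j-1}` and the
first `n_j` letters of `B_{j+1}` both equal `x = B_jᴿ`, and `B_{j-1} B_j B_{j+1}` contains `x xᴿ x`.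
-/

namespace Alt

theorem eq_of_length_eq_of_head?_eq : ∀ {u v : List Bool}, Alt u → Alt v →
    u.length = v.length → u.head? = v.head? → u = v
  | [], [], _, _, _, _ => rfl
  | a :: u, b :: v, hu, hv, hl, hh => by
    obtain rfl : a = b := by simpa using hh
    have hu' := List.isChain_cons.1 hu
    have hv' := List.isChain_cons.1 hv
    refine congrArg (a :: ·) (eq_of_length_eq_of_head?_eq hu'.2 hv'.2 (by simpa using hl) ?_)
    match u, v, hl with
    | [], [], _ => rfl
    | c :: _, d :: _, _ =>
      have hc : a ≠ c := hu'.1 c rfl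
      have hd : a ≠ d := hv'.1 d rfl
      cases a <;> cases c <;> cases d <;> simp_all

theorem reverse {u : List Bool} (h : Alt u) : Alt u.reverse :=
  List.isChain_reverse.2 (h.imp fun _ _ hab => hab.symm)

theorem cons_of_avoidsCubes {A : List Bool} {b : Bool} (hA : Alt A)
    (hc : AvoidsCubes (b :: b :: A)) : Alt (b :: A) := by
  refine List.isChain_cons.2 ⟨?_, hA⟩
  rintro c hc' rfl
  obtain ⟨t, rfl⟩ : ∃ t, A = b :: t := by
    cases A <;> simp_all
  cases b
  exacts [hc.1 ⟨[], t, rfl⟩, hc.2 ⟨[], t, rfl⟩]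

theorem append_singleton_of_avoidsCubes {A : List Bool} {b : Bool} (hA : Alt A)
    (hc : AvoidsCubes (A ++ [b, b])) : Alt (A ++ [b]) := by
  have hcr : AvoidsCubes (b :: b :: A.reverse) :=
    ⟨fun h => hc.1 (by simpa using h.reverse), fun h => hc.2 (by simpa using h.reverse)⟩
  simpa using (cons_of_avoidsCubes hA.reverse hcr).reverse

theorem drop_eq_reverse {C M : List Bool} (hC : Alt C) (hM : Alt M)
    (hl : M.length ≤ C.length) (h : C.getLast? = M.head?) :
    C.drop (C.length - M.length) = M.reverse := by
  rcases eq_or_ne M [] with rfl | hne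
  · simp
  rw [← List.reverse_eq_iff]
  refine eq_of_length_eq_of_head?_eq (Alt.reverse (hC.drop _)) hM (by simp; omega) ?_
  rw [List.head?_reverse, List.getLast?_drop, if_neg (by grind [List.length_eq_zero_iff]), h]

theorem take_eq_reverse {D M : List Bool} (hD : Alt D) (hM : Alt M)
    (hl : M.length ≤ D.length) (h : M.getLast? = D.head?) :
    D.take M.length = M.reverse := by
  rcases eq_or_ne M [] with rfl | hne
  · simp
  refine eq_of_length_eq_of_head?_eq (hD.take _) hM.reverse (by simp; omega) ?_
  rw [List.head?_reverse, List.head?_take, if_neg (by grind [List.length_eq_zero_iff]), h]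

theorem not_avoidsP_append {C M D : List Bool} (hC : Alt C) (hM : Alt M) (hD : Alt D)
    (hne : M ≠ []) (hlC : M.length ≤ C.length) (hlD : M.length ≤ D.length)
    (hCM : C.getLast? = M.head?) (hMD : M.getLast? = D.head?) :
    ¬ AvoidsP (C ++ M ++ D) := by
  refine fun hw => hw ⟨M.reverse, by simpa using hne, ?_⟩
  refine ⟨C.take (C.length - M.length), D.drop M.length, ?_⟩
  conv_rhs => rw [← List.take_append_drop (C.length - M.length) C,
    ← List.take_append_drop M.length D, drop_eq_reverse hC hM hlC hCM,
    take_eq_reverse hD hM hlD hMD]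
  simp

end Alt

theorem AvoidsCubes.mono {v w : List Bool} (h : v <:+: w) (hw : AvoidsCubes w) : AvoidsCubes v :=
  ⟨fun h' => hw.1 (h'.trans h), fun h' => hw.2 (h'.trans h)⟩

theorem AvoidsP.mono {v w : List Bool} (h : v <:+: w) (hw : AvoidsP w) : AvoidsP v :=
  fun ⟨u, hu, hi⟩ => hw ⟨u, hu, hi.trans h⟩

theorem glue_cons_cons (A A' : List Bool) (As : List (List Bool)) (b : Bool) (bs : List Bool) :
    glue (A :: A' :: As) (b :: bs) = A ++ b :: b :: glue (A' :: As) bs := by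
  simp [glue]

/-- `blocksAfter a_i [A_i, …, A_k] [a_{i+1}, …, a_k] = [a_i A_i a_{i+1}, …, a_k A_k]`. -/
def blocksAfter (b : Bool) : List (List Bool) → List Bool → List (List Bool)
  | [], _ => []
  | [A], _ => [b :: A]
  | A :: As, b' :: bs => (b :: (A ++ [b'])) :: blocksAfter b' As bs
  | _ :: _, [] => []

def blocks : List (List Bool) → List Bool → List (List Bool)
  | A :: As, b :: bs => (A ++ [b]) :: blocksAfter b As bs
  | As, _ => As

theorem flatten_blocksAfter : ∀ {As : List (List Bool)} {bs : List Bool} (b : Bool),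
    As.length = bs.length + 1 → (blocksAfter b As bs).flatten = b :: glue As bs
  | [_], [], _, _ => by simp [blocksAfter, glue]
  | A :: A' :: As, b' :: bs, b, h => by
    have ih := flatten_blocksAfter (As := A' :: As) b' (by simpa using h)
    simp [blocksAfter, ih, glue_cons_cons]
  | [], _, _, h | [_], _ :: _, _, h | _ :: _ :: _, [], _, h => by simp at h

theorem map_length_blocksAfter : ∀ {As : List (List Bool)} {bs : List Bool} (b : Bool),
    As.length = bs.length + 1 → (blocksAfter b As bs).map List.length = seqMid As
  | [_], [], _, _ => by simp [blocksAfter, seqMid]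
  | A :: A' :: As, b' :: bs, b, h => by
    have ih := map_length_blocksAfter (As := A' :: As) b' (by simpa using h)
    simp [blocksAfter, ih, seqMid]
  | [], _, _, h | [_], _ :: _, _, h | _ :: _ :: _, [], _, h => by simp at h

theorem isChain_blocksAfter : ∀ (As : List (List Bool)) (bs : List Bool) (b : Bool),
    ([b] :: blocksAfter b As bs).IsChain fun B B' => B.getLast? = B'.head?
  | [], _, _ | _ :: _ :: _, [], _ => by simp [blocksAfter]
  | [_], _, _ => by simp [blocksAfter]
  | A :: A' :: As, b' :: bs, b => by
    have ih := List.isChain_cons.1 (isChain_blocksAfter (A' :: As) bs b')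
    have hlast : (b :: (A ++ [b'])).getLast? = [b'].getLast? := by
      rw [← List.cons_append, List.getLast?_concat]; rfl
    simp only [blocksAfter, List.isChain_cons_cons]
    exact ⟨rfl, List.isChain_cons.2 ⟨hlast ▸ ih.1, ih.2⟩⟩

theorem nil_not_mem_blocksAfter : ∀ (As : List (List Bool)) (bs : List Bool) (b : Bool),
    [] ∉ blocksAfter b As bs
  | [], _, _ | _ :: _ :: _, [], _ => by simp [blocksAfter]
  | [_], _, _ => by simp [blocksAfter]
  | A :: A' :: As, b' :: bs, b => by
    simpa [blocksAfter] using nil_not_mem_blocksAfter (A' :: As) bs b'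

theorem alt_of_mem_blocksAfter : ∀ {As : List (List Bool)} {bs : List Bool} {b : Bool},
    (∀ A ∈ As, Alt A) → AvoidsCubes (b :: b :: glue As bs) →
    ∀ B ∈ blocksAfter b As bs, Alt B
  | [], _, _, _, _ | _ :: _ :: _, [], _, _, _ => by simp [blocksAfter]
  | [A], _, _, hAs, hc => by
    simpa [blocksAfter] using Alt.cons_of_avoidsCubes (hAs A (by simp)) (by simpa [glue] using hc)
  | A :: A' :: As, b' :: bs, b, hAs, hc => by
    rw [glue_cons_cons] at hc
    have hfirst : Alt ((b :: A) ++ [b']) :=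
      Alt.append_singleton_of_avoidsCubes
        (Alt.cons_of_avoidsCubes (hAs A (by simp))
          (hc.mono ⟨[], b' :: b' :: glue (A' :: As) bs, by simp⟩))
        (hc.mono ⟨[b], glue (A' :: As) bs, by simp⟩)
    have hrest := alt_of_mem_blocksAfter (As := A' :: As) (bs := bs) (b := b')
      (fun A hA => hAs A (List.mem_cons_of_mem _ hA)) (hc.mono ⟨b :: b :: A, [], by simp⟩)
    simp only [blocksAfter, List.forall_mem_cons]
    exact ⟨hfirst, hrest⟩

theorem glue_eq_flatten_blocks : ∀ {As : List (List Bool)} {bs : List Bool},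
    As.length = bs.length + 1 → glue As bs = (blocks As bs).flatten
  | [_], [], _ => by simp [blocks, glue]
  | A :: A' :: As, b :: bs, h => by
    rw [glue_cons_cons, blocks, List.flatten_cons, flatten_blocksAfter b (by simpa using h)]
    simp
  | [], _, h | [_], _ :: _, h | _ :: _ :: _, [], h => by simp at h

theorem seqOf_eq_map_length_blocks : ∀ {As : List (List Bool)} {bs : List Bool},
    As.length = bs.length + 1 → 2 ≤ As.length → seqOf As = (blocks As bs).map List.length
  | A :: A' :: As, b :: bs, h, _ => by
    simp [seqOf, blocks, map_length_blocksAfter b (As := A' :: As) (by simpa using h)]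
  | [], _, _, h | [_], _, _, h => by simp at h
  | _ :: _ :: _, [], h, _ => by simp at h

theorem alt_of_mem_blocks : ∀ {As : List (List Bool)} {bs : List Bool},
    As.length = bs.length + 1 → (∀ A ∈ As, Alt A) → AvoidsCubes (glue As bs) →
    ∀ B ∈ blocks As bs, Alt B
  | [A], [], _, hAs, _ => by simpa [blocks] using hAs
  | A :: A' :: As, b :: bs, _, hAs, hc => by
    rw [glue_cons_cons] at hc
    have hfirst : Alt (A ++ [b]) :=
      Alt.append_singleton_of_avoidsCubes (hAs A (by simp))
        (hc.mono ⟨[], glue (A' :: As) bs, by simp⟩)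
    have hrest := alt_of_mem_blocksAfter (As := A' :: As) (bs := bs) (b := b)
      (fun A hA => hAs A (List.mem_cons_of_mem _ hA)) (hc.mono ⟨A, [], by simp⟩)
    simp only [blocks, List.forall_mem_cons]
    exact ⟨hfirst, hrest⟩
  | [], _, h, _, _ | [_], _ :: _, h, _, _ | _ :: _ :: _, [], h, _, _ => by simp at h

theorem isChain_blocks : ∀ {As : List (List Bool)} {bs : List Bool},
    As.length = bs.length + 1 → (blocks As bs).IsChain fun B B' => B.getLast? = B'.head?
  | [_], [], _ => by simp [blocks]
  | A :: As, b :: bs, _ => by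
    have h := List.isChain_cons.1 (isChain_blocksAfter As bs b)
    exact List.isChain_cons.2 ⟨by simpa using h.1, h.2⟩
  | [], _, h | _ :: _ :: _, [], h => by simp at h

theorem nil_not_mem_blocks : ∀ {As : List (List Bool)} {bs : List Bool},
    bs ≠ [] → [] ∉ blocks As bs
  | A :: As, b :: bs, _ => by simpa [blocks] using nil_not_mem_blocksAfter As bs b
  | [], _ :: _, _ => by simp [blocks]

theorem length_seqOf_le_one : ∀ {As : List (List Bool)},
    As.length ≤ 1 → (seqOf As).length ≤ 1
  | [], _ => by simp [seqOf]
  | [A], _ => by by_cases h : A.isEmpty <;> simp [seqOf, h]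
  | _ :: _ :: _, h => by simp at h

theorem not_avoidsP_flatten_of_not_noValley {Bs : List (List Bool)} (hBs : ∀ B ∈ Bs, Alt B)
    (hchain : Bs.IsChain fun B B' => B.getLast? = B'.head?) (hnil : [] ∉ Bs)
    (hv : ¬ NoValley (Bs.map List.length)) : ¬ AvoidsP Bs.flatten := by
  simp only [NoValley, not_forall, not_not, List.length_map] at hv
  obtain ⟨j, hj1, hj2, hge, hle⟩ := hv
  obtain ⟨i, rfl⟩ : ∃ i, j = i + 1 := ⟨j - 1, by omega⟩
  have hdrop : Bs.drop i = Bs[i] :: Bs[i + 1] :: Bs[i + 2] :: Bs.drop (i + 3) := by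
    rw [List.drop_eq_getElem_cons, List.drop_eq_getElem_cons, List.drop_eq_getElem_cons]
  have hinf : Bs[i] ++ Bs[i + 1] ++ Bs[i + 2] <:+: Bs.flatten := by
    refine ⟨(Bs.take i).flatten, (Bs.drop (i + 3)).flatten, ?_⟩
    have hsplit : Bs.flatten = (Bs.take i).flatten ++ (Bs.drop i).flatten := by
      rw [← List.flatten_append, List.take_append_drop]
    rw [hsplit, hdrop]
    simp only [List.flatten_cons, List.append_assoc]
  have hlength (k : ℕ) (hk : k < Bs.length) : (Bs.map List.length).getD k 0 = Bs[k].length := by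
    simp [List.getD_eq_getElem?_getD, hk]
  rw [Nat.add_sub_cancel, hlength i (by omega), hlength (i + 1) (by omega)] at hge
  rw [hlength (i + 1) (by omega), hlength (i + 2) (by omega)] at hle
  refine fun hw => Alt.not_avoidsP_append (hBs _ (List.getElem_mem _)) (hBs _ (List.getElem_mem _))
    (hBs _ (List.getElem_mem _)) (fun h => hnil (h ▸ List.getElem_mem _)) hge hle
    (hchain.getElem i (by omega)) (hchain.getElem (i + 1) (by omega)) (hw.mono hinf)

theorem stmt3_general (w : List Bool) (hc : AvoidsCubes w)
    (As : List (List Bool)) (bs : List Bool) (hf : IsFact As bs w)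
    (j : ℕ) (hj1 : 1 ≤ j) (hj2 : j + 1 < (seqOf As).length)
    (hge : (seqOf As).getD (j - 1) 0 ≥ (seqOf As).getD j 0)
    (hle : (seqOf As).getD j 0 ≤ (seqOf As).getD (j + 1) 0) :
    ¬ AvoidsP w := by
  obtain ⟨hlen, hAs, rfl⟩ := hf
  have h2 : 2 ≤ As.length := by
    by_contra h
    have := length_seqOf_le_one (As := As) (by omega)
    omega
  have hv : ¬ NoValley ((blocks As bs).map List.length) := by
    rw [← seqOf_eq_map_length_blocks hlen h2]
    exact fun h => h j hj1 hj2 ⟨hge, hle⟩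
  rw [glue_eq_flatten_blocks hlen]
  exact not_avoidsP_flatten_of_not_noValley (alt_of_mem_blocks hlen hAs hc) (isChain_blocks hlen)
    (nil_not_mem_blocks (by rintro rfl; simp at hlen; omega)) hv

/-- If the associated sequence of a word starting with `0` avoiding `000`,`111` has a
valley, then the word contains an instance of `x xᴿ x`. -/
theorem stmt3 (w : List Bool) (h0 : w.head? = some false) (hc : AvoidsCubes w)
    (As : List (List Bool)) (bs : List Bool) (hf : IsFact As bs w)
    (j : ℕ) (hj1 : 1 ≤ j) (hj2 : j + 1 < (seqOf As).length)
    (hge : (seqOf As).getD (j - 1) 0 ≥ (seqOf As).getD j 0)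
    (hle : (seqOf As).getD j 0 ≤ (seqOf As).getD (j + 1) 0) :
    ¬ AvoidsP w :=
  stmt3_general w hc As bs hf j hj1 hj2 hge hle
end

section
/- Let w be a binary word starting with 0 that avoids factors 000 and 111 and contains an instance of the pattern xx^Rx. Then its associated sequence f(w) = (n_0,...,n_k) has an index j with 1 ≤ j ≤ k-1 such that n_{j-1} ≥ n_j and n_j ≤ n_{j+1}; equivalently f(w) does not belong to X. -/
/-!
Cutting `w` between any two equal adjacent letters yields the blocks `A₀a₁, a₁A₁a₂, …, a_kA_k`
of the canonical factorization (this is where `000` and `111` are excluded), so `f(w)` is the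
sequence of gaps between consecutive cut points, the ends of `w` included. In an occurrence of
`u uᴿ u`, both junctions are cuts, and the other cuts inside it are the doubles of `u` and their
mirror images. If `r` is the last double of `u` (or `0`), the first junction is at distance
`|u| - r` from the next cut and at least that far from the previous one: a descent of `f(w)`.
Symmetrically, the first double `l` of `u` (or `|u|`) makes the second junction an ascent. A
descent followed by an ascent forces a valley in between.
-/

def IsValley (d : List ℕ) (j : ℕ) : Prop :=
  1 ≤ j ∧ j + 1 < d.length ∧ d.getD (j - 1) 0 ≥ d.getD j 0 ∧ d.getD j 0 ≤ d.getD (j + 1) 0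

theorem exists_isValley_of_descent_of_ascent {d : List ℕ} {a b : ℕ} (ha : 1 ≤ a) (hab : a ≤ b)
    (hb : b + 1 < d.length) (hdesc : d.getD a 0 ≤ d.getD (a - 1) 0)
    (hasc : d.getD b 0 ≤ d.getD (b + 1) 0) : ∃ j, IsValley d j := by
  induction b, hab using Nat.le_induction with
  | base => exact ⟨a, ha, hb, hdesc, hasc⟩
  | succ b hab ih =>
    by_cases h : d.getD (b + 1) 0 ≤ d.getD b 0
    · exact ⟨b + 1, by omega, hb, h, hasc⟩
    · exact ih (by omega) (by omega)

def gapSeq (C : List ℕ) : List ℕ := List.zipWith (fun a b => b - a) C C.tail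

theorem gapSeq_cons_cons (a b : ℕ) (l : List ℕ) :
    gapSeq (a :: b :: l) = (b - a) :: gapSeq (b :: l) :=
  rfl

theorem getD_gapSeq {C : List ℕ} {i : ℕ} (h : i + 1 < C.length) :
    (gapSeq C).getD i 0 = C.getD (i + 1) 0 - C.getD i 0 := by
  simp [gapSeq, List.getD_eq_getElem?_getD, List.getElem?_zipWith, h, Nat.lt_of_succ_lt h]

theorem exists_isValley_gapSeq_of_descent_of_ascent {C : List ℕ} {a b : ℕ} (ha : 1 ≤ a) (hab : a < b)
    (hb : b + 1 < C.length)
    (hdesc : C.getD (a + 1) 0 - C.getD a 0 ≤ C.getD a 0 - C.getD (a - 1) 0)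
    (hasc : C.getD b 0 - C.getD (b - 1) 0 ≤ C.getD (b + 1) 0 - C.getD b 0) :
    ∃ j, IsValley (gapSeq C) j := by
  refine exists_isValley_of_descent_of_ascent (a := a) (b := b - 1) ha (by omega)
    (by simp [gapSeq]; omega) ?_ ?_
  · rwa [getD_gapSeq (by omega), getD_gapSeq (by omega), Nat.sub_add_cancel ha]
  · rwa [getD_gapSeq (by omega), getD_gapSeq (by omega), Nat.sub_add_cancel (by omega)]

namespace List

variable {C : List ℕ}

theorem mem_iff_exists_getD {c : ℕ} : c ∈ C ↔ ∃ i < C.length, C.getD i 0 = c := by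
  simp only [mem_iff_getElem]
  constructor
  · rintro ⟨i, hi, rfl⟩
    exact ⟨i, hi, getD_eq_getElem _ _ hi⟩
  · rintro ⟨i, hi, rfl⟩
    exact ⟨i, hi, (getD_eq_getElem _ _ hi).symm⟩

theorem getD_mem {i : ℕ} (hi : i < C.length) : C.getD i 0 ∈ C :=
  mem_iff_exists_getD.2 ⟨i, hi, rfl⟩

theorem Pairwise.getD_lt_getD_iff (hC : C.Pairwise (· < ·)) {i j : ℕ} (hi : i < C.length)
    (hj : j < C.length) : C.getD i 0 < C.getD j 0 ↔ i < j := by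
  rw [getD_eq_getElem _ _ hi, getD_eq_getElem _ _ hj]
  exact hC.sortedLT.strictMono_get.lt_iff_lt (a := ⟨i, hi⟩) (b := ⟨j, hj⟩)

theorem Pairwise.getD_succ_le_of_mem (hC : C.Pairwise (· < ·)) {a c : ℕ}
    (ha : a + 1 < C.length) (hc : c ∈ C) (hac : C.getD a 0 < c) : C.getD (a + 1) 0 ≤ c := by
  obtain ⟨k, hk, rfl⟩ := mem_iff_exists_getD.1 hc
  have := (hC.getD_lt_getD_iff (by omega) hk).1 hac
  rcases (Nat.succ_le_of_lt this).lt_or_eq with h | rfl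
  · exact ((hC.getD_lt_getD_iff ha hk).2 h).le
  · exact le_rfl

theorem Pairwise.le_getD_pred_of_mem (hC : C.Pairwise (· < ·)) {a c : ℕ}
    (ha : a < C.length) (hc : c ∈ C) (hca : c < C.getD a 0) : c ≤ C.getD (a - 1) 0 := by
  obtain ⟨k, hk, rfl⟩ := mem_iff_exists_getD.1 hc
  have := (hC.getD_lt_getD_iff hk ha).1 hca
  rcases (Nat.le_sub_one_of_lt this).lt_or_eq with h | h
  · exact ((hC.getD_lt_getD_iff hk (by omega)).2 h).le
  · rw [h]

theorem Pairwise.exists_neighbours (hC : C.Pairwise (· < ·)) {x y z : ℕ} (hy : y ∈ C)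
    (hisol : ∀ c ∈ C, x < c → c < z → c = y) (hxy : x < y) (hyz : y < z)
    (hlo : ∃ c ∈ C, c ≤ x) (hhi : ∃ c ∈ C, z ≤ c) :
    ∃ a, 1 ≤ a ∧ a + 1 < C.length ∧ C.getD a 0 = y ∧ C.getD (a - 1) 0 ≤ x ∧
      z ≤ C.getD (a + 1) 0 := by
  obtain ⟨a, ha, rfl⟩ := mem_iff_exists_getD.1 hy
  obtain ⟨_, hlo, hcx⟩ := hlo
  obtain ⟨i, hi, rfl⟩ := mem_iff_exists_getD.1 hlo
  obtain ⟨_, hhi, hzc⟩ := hhi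
  obtain ⟨k, hk, rfl⟩ := mem_iff_exists_getD.1 hhi
  have hia : i < a := (hC.getD_lt_getD_iff hi ha).1 (by omega)
  have hak : a < k := (hC.getD_lt_getD_iff ha hk).1 (by omega)
  refine ⟨a, by omega, by omega, rfl, ?_, ?_⟩
  · by_contra! h
    have hlt := (hC.getD_lt_getD_iff (by omega) ha).2 (show a - 1 < a by omega)
    have := hisol _ (getD_mem (by omega)) h (by omega)
    omega
  · by_contra! h
    have hlt := (hC.getD_lt_getD_iff ha (by omega)).2 (show a < a + 1 by omega)
    have := hisol _ (getD_mem (by omega)) (by omega) h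
    omega

end List

def HasDoubleAt (w : List Bool) (p : ℕ) : Prop := 0 < p ∧ p < w.length ∧ w[p - 1]? = w[p]?

theorem AvoidsCubes.not_hasDoubleAt_and_succ {w : List Bool} (hc : AvoidsCubes w) (p : ℕ) :
    ¬ (HasDoubleAt w p ∧ HasDoubleAt w (p + 1)) := by
  rintro ⟨⟨hp, -, h1⟩, ⟨-, hp2, h2⟩⟩
  obtain ⟨x, hx⟩ : ∃ x, w[p - 1]? = some x := ⟨_, List.getElem?_eq_getElem (by omega)⟩
  have hcube : [x, x, x] <:+: w := by
    refine List.infix_iff_getElem?.2 ⟨p - 1, by simp; omega, fun i hi => ?_⟩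
    simp only [List.length_cons, List.length_nil] at hi
    interval_cases i <;> grind
  cases x
  · exact hc.1 hcube
  · exact hc.2 hcube

theorem Alt.not_hasDoubleAt {A : List Bool} (hA : Alt A) (p : ℕ) : ¬ HasDoubleAt A p := by
  rintro ⟨hp, hpA, h⟩
  have := List.isChain_iff_getElem.1 hA (p - 1) (by omega)
  simp only [List.getElem?_eq_getElem (show p - 1 < A.length by omega),
    List.getElem?_eq_getElem hpA, Option.some.injEq] at h
  grind

theorem hasDoubleAt_append_left_iff (l : List Bool) {R : List Bool} {q : ℕ} (hq : 0 < q) :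
    HasDoubleAt (l ++ R) (l.length + q) ↔ HasDoubleAt R q := by
  simp only [HasDoubleAt, List.length_append,
    List.getElem?_append_right (by omega : l.length ≤ l.length + q - 1),
    List.getElem?_append_right (by omega : l.length ≤ l.length + q)]
  grind

theorem hasDoubleAt_append_right_iff {v : List Bool} (t : List Bool) {j : ℕ}
    (hj : j < v.length) : HasDoubleAt (v ++ t) j ↔ HasDoubleAt v j := by
  simp only [HasDoubleAt, List.length_append, List.getElem?_append_left hj,
    List.getElem?_append_left (by omega : j - 1 < v.length)]
  grind

theorem hasDoubleAt_append_pair_iff {A R : List Bool} {b : Bool} (hA : Alt A)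
    (hc : AvoidsCubes (A ++ [b, b] ++ R)) (p : ℕ) :
    HasDoubleAt (A ++ [b, b] ++ R) p ↔
      p = A.length + 1 ∨ ∃ q, HasDoubleAt R q ∧ q + (A.length + 2) = p := by
  have hpair : HasDoubleAt (A ++ [b, b] ++ R) (A.length + 1) := by
    exact ⟨by omega, by simp, by simp⟩
  constructor
  · intro h
    rcases lt_trichotomy p (A.length + 1) with hp | rfl | hp
    · exfalso
      rcases (Nat.lt_succ_iff.1 hp).lt_or_eq with hp | rfl
      · rw [List.append_assoc, hasDoubleAt_append_right_iff _ hp] at h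
        exact hA.not_hasDoubleAt p h
      · exact hc.not_hasDoubleAt_and_succ _ ⟨h, hpair⟩
    · exact .inl rfl
    · obtain ⟨q, rfl⟩ : ∃ q, p = A.length + 2 + q := ⟨p - (A.length + 2), by omega⟩
      rcases Nat.eq_zero_or_pos q with rfl | hq
      · exact (hc.not_hasDoubleAt_and_succ _ ⟨hpair, h⟩).elim
      · rw [show A.length + 2 = (A ++ [b, b]).length by simp,
          hasDoubleAt_append_left_iff _ hq] at h
        exact .inr ⟨q, h, by omega⟩
  · rintro (rfl | ⟨q, hq, rfl⟩)
    · exact hpair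
    · rw [add_comm, show A.length + 2 = (A ++ [b, b]).length by simp,
        hasDoubleAt_append_left_iff _ hq.1]
      exact hq

theorem hasDoubleAt_infix_iff (s t : List Bool) {v : List Bool} {j : ℕ} (hj0 : 0 < j)
    (hj : j < v.length) : HasDoubleAt (s ++ v ++ t) (s.length + j) ↔ HasDoubleAt v j := by
  rw [List.append_assoc, hasDoubleAt_append_left_iff _ hj0, hasDoubleAt_append_right_iff _ hj]

theorem hasDoubleAt_reverse_iff {u : List Bool} {j : ℕ} :
    HasDoubleAt u.reverse j ↔ HasDoubleAt u (u.length - j) := by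
  unfold HasDoubleAt
  constructor
  · rintro ⟨h0, hj, h⟩
    simp only [List.length_reverse] at hj
    rw [List.getElem?_reverse (by omega), List.getElem?_reverse hj] at h
    refine ⟨by omega, by omega, ?_⟩
    rw [show u.length - j - 1 = u.length - 1 - j by omega, ← h]
    congr 1
    omega
  · rintro ⟨h0, hj, h⟩
    simp only [List.length_reverse]
    refine ⟨by omega, by omega, ?_⟩
    rw [List.getElem?_reverse (by omega), List.getElem?_reverse (by omega),
      show u.length - 1 - j = u.length - j - 1 by omega, h]
    congr 1
    omega

/-- Out of range, the truncated subtractions give `0`, where `u` has no double. -/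
theorem hasDoubleAt_pattern_iff {u : List Bool} {j : ℕ} (hj : j < 3 * u.length) :
    HasDoubleAt (u ++ u.reverse ++ u) j ↔
      HasDoubleAt u j ∨ j = u.length ∨ HasDoubleAt u (2 * u.length - j) ∨
        j = 2 * u.length ∨ HasDoubleAt u (j - 2 * u.length) := by
  have hbound : ∀ {p}, HasDoubleAt u p → 0 < p ∧ p < u.length := fun h => ⟨h.1, h.2.1⟩
  have hv : (u ++ u.reverse).length = 2 * u.length := by simp; omega
  rcases lt_or_ge j u.length with hj1 | hj1
  · rw [hasDoubleAt_append_right_iff _ (by omega), hasDoubleAt_append_right_iff _ hj1]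
    refine ⟨.inl, ?_⟩
    rintro (h | h | h | h | h) <;> first | exact h | (have := hbound h; omega) | omega
  rcases lt_or_ge j (2 * u.length) with hj2 | hj2
  · rw [hasDoubleAt_append_right_iff _ (by omega)]
    obtain ⟨k, rfl⟩ : ∃ k, j = u.length + k := ⟨j - u.length, by omega⟩
    rcases Nat.eq_zero_or_pos k with rfl | hk
    · refine iff_of_true ⟨by omega, by simp; omega, ?_⟩ (.inr (.inl rfl))
      rw [List.getElem?_append_left (by omega), add_zero, List.getElem?_append_right le_rfl,
        Nat.sub_self, List.getElem?_reverse (by omega), Nat.sub_zero]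
    rw [hasDoubleAt_append_left_iff _ hk, hasDoubleAt_reverse_iff,
      show 2 * u.length - (u.length + k) = u.length - k by omega]
    refine ⟨fun h => .inr (.inr (.inl h)), ?_⟩
    rintro (h | h | h | h | h) <;> first | exact h | (have := hbound h; omega) | omega
  obtain ⟨k, rfl⟩ : ∃ k, j = 2 * u.length + k := ⟨j - 2 * u.length, by omega⟩
  rcases Nat.eq_zero_or_pos k with rfl | hk
  · refine iff_of_true ⟨by omega, by simp; omega, ?_⟩ (.inr (.inr (.inr (.inl rfl))))
    rw [add_zero, List.getElem?_append_left (by omega), List.getElem?_append_right (by omega),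
      List.getElem?_append_right (by omega), List.getElem?_reverse (by omega)]
    congr 1
    omega
  rw [← hv, hasDoubleAt_append_left_iff _ hk, hv, Nat.add_sub_cancel_left]
  refine ⟨fun h => .inr (.inr (.inr (.inr h))), ?_⟩
  rintro (h | h | h | h | h) <;> first | exact h | (have := hbound h; omega) | omega

def IsCutList (w : List Bool) (C : List ℕ) : Prop :=
  C.Pairwise (· < ·) ∧ ∀ p, p ∈ C ↔ p = 0 ∨ HasDoubleAt w p ∨ p = w.length

namespace IsCutList

variable {C : List ℕ} {s u t : List Bool}

theorem mem_pattern_iff (hC : IsCutList (s ++ (u ++ u.reverse ++ u) ++ t) C) {j : ℕ}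
    (hj0 : 0 < j) (hj : j < 3 * u.length) :
    s.length + j ∈ C ↔ HasDoubleAt u j ∨ j = u.length ∨ HasDoubleAt u (2 * u.length - j) ∨
        j = 2 * u.length ∨ HasDoubleAt u (j - 2 * u.length) := by
  rw [hC.2, ← hasDoubleAt_pattern_iff hj, ← hasDoubleAt_infix_iff s t hj0 (by simp; omega)]
  simp only [List.length_append, List.length_reverse]
  constructor
  · rintro (h | h | h) <;> first | exact h | omega
  · exact fun h => .inr (.inl h)

theorem exists_descent_at_first_junction (hC : IsCutList (s ++ (u ++ u.reverse ++ u) ++ t) C)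
    (hu : u ≠ []) :
    ∃ a, 1 ≤ a ∧ a + 1 < C.length ∧ C.getD a 0 = s.length + u.length ∧
      C.getD (a + 1) 0 - C.getD a 0 ≤ C.getD a 0 - C.getD (a - 1) 0 := by
  classical
  have hm : 0 < u.length := List.length_pos_iff.2 hu
  obtain ⟨r, hrm, hr, hr_max⟩ : ∃ r < u.length, (r = 0 ∨ HasDoubleAt u r) ∧
      ∀ i, r < i → ¬ HasDoubleAt u i := by
    let P i := i = 0 ∨ HasDoubleAt u i
    refine ⟨Nat.findGreatest P (u.length - 1), ?_,
      Nat.findGreatest_spec (P := P) (m := 0) (Nat.zero_le _) (.inl rfl), fun i hi h => ?_⟩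
    · have := Nat.findGreatest_le (P := P) (u.length - 1)
      omega
    · exact Nat.findGreatest_is_greatest hi (by have := h.2.1; omega) (.inr h)
  have hy : s.length + u.length ∈ C := (hC.mem_pattern_iff hm (by omega)).2 (.inr (.inl rfl))
  have hz : s.length + (2 * u.length - r) ∈ C := by
    refine (hC.mem_pattern_iff (by omega) (by omega)).2 ?_
    rcases hr with rfl | hr
    · exact .inr (.inr (.inr (.inl (by omega))))
    · exact .inr (.inr (.inl (by rwa [show 2 * u.length - (2 * u.length - r) = r by omega])))
  have hisol : ∀ c ∈ C, s.length + r < c → c < s.length + (2 * u.length - r) →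
      c = s.length + u.length := by
    intro c hc h1 h2
    obtain ⟨j, rfl⟩ : ∃ j, c = s.length + j := ⟨c - s.length, by omega⟩
    rcases (hC.mem_pattern_iff (by omega) (by omega)).1 hc with h | h | h | h | h <;>
      first | omega | exact (hr_max _ (by omega) h).elim | exact absurd h.1 (by omega)
  obtain ⟨a, ha1, ha, hya, hxa, -⟩ := hC.1.exists_neighbours hy hisol (by omega) (by omega)
    ⟨0, (hC.2 0).2 (.inl rfl), by omega⟩ ⟨_, (hC.2 _).2 (.inr (.inr rfl)), by simp; omega⟩
  have hza := hC.1.getD_succ_le_of_mem ha hz (by omega)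
  exact ⟨a, ha1, ha, hya, by omega⟩

theorem exists_ascent_at_second_junction (hC : IsCutList (s ++ (u ++ u.reverse ++ u) ++ t) C)
    (hu : u ≠ []) :
    ∃ b, 1 ≤ b ∧ b + 1 < C.length ∧ C.getD b 0 = s.length + 2 * u.length ∧
      C.getD b 0 - C.getD (b - 1) 0 ≤ C.getD (b + 1) 0 - C.getD b 0 := by
  classical
  have hm : 0 < u.length := List.length_pos_iff.2 hu
  obtain ⟨l, hl0, hlm, hl, hl_min⟩ : ∃ l, 0 < l ∧ l ≤ u.length ∧
      (l = u.length ∨ HasDoubleAt u l) ∧ ∀ i < l, ¬ HasDoubleAt u i := by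
    have hex : ∃ l, 0 < l ∧ (l = u.length ∨ HasDoubleAt u l) := ⟨u.length, hm, .inl rfl⟩
    exact ⟨Nat.find hex, (Nat.find_spec hex).1, Nat.find_min' hex ⟨hm, .inl rfl⟩,
      (Nat.find_spec hex).2, fun i hi h => Nat.find_min hex hi ⟨h.1, .inr h⟩⟩
  have hy : s.length + 2 * u.length ∈ C :=
    (hC.mem_pattern_iff (by omega) (by omega)).2 (.inr (.inr (.inr (.inl rfl))))
  have hx : s.length + (2 * u.length - l) ∈ C := by
    refine (hC.mem_pattern_iff (by omega) (by omega)).2 ?_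
    rcases hl with rfl | hl
    · exact .inr (.inl (by omega))
    · exact .inr (.inr (.inl (by rwa [show 2 * u.length - (2 * u.length - l) = l by omega])))
  have hisol : ∀ c ∈ C, s.length + (2 * u.length - l) < c → c < s.length + 2 * u.length + l →
      c = s.length + 2 * u.length := by
    intro c hc h1 h2
    obtain ⟨j, rfl⟩ : ∃ j, c = s.length + j := ⟨c - s.length, by omega⟩
    rcases (hC.mem_pattern_iff (by omega) (by omega)).1 hc with h | h | h | h | h <;>
      first
        | omega
        | exact (hl_min _ (by omega) h).elim
        | exact absurd h.1 (by omega)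
        | exact absurd h.2.1 (by omega)
  obtain ⟨b, hb1, hb, hyb, -, hzb⟩ := hC.1.exists_neighbours hy hisol (by omega) (by omega)
    ⟨_, hx, le_rfl⟩ ⟨_, (hC.2 _).2 (.inr (.inr rfl)), by simp; omega⟩
  have hxb := hC.1.le_getD_pred_of_mem (a := b) (by omega) hx (by omega)
  exact ⟨b, hb1, hb, hyb, by omega⟩

theorem exists_isValley_gapSeq_of_pattern
    (hC : IsCutList (s ++ (u ++ u.reverse ++ u) ++ t) C) (hu : u ≠ []) :
    ∃ j, IsValley (gapSeq C) j := by
  obtain ⟨a, ha1, ha, hya, hdesc⟩ := hC.exists_descent_at_first_junction hu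
  obtain ⟨b, -, hb, hyb, hasc⟩ := hC.exists_ascent_at_second_junction hu
  have hm : 0 < u.length := List.length_pos_iff.2 hu
  have hab : a < b := (hC.1.getD_lt_getD_iff (by omega) (by omega)).1 (by omega)
  exact exists_isValley_gapSeq_of_descent_of_ascent ha1 hab hb hdesc hasc

end IsCutList

def cutPoints : List (List Bool) → List ℕ
  | [] => []
  | [_] => []
  | A :: As => (A.length + 1) :: (cutPoints As).map (· + (A.length + 2))

theorem pairwise_cutPoints (As : List (List Bool)) : (cutPoints As).Pairwise (· < ·) := by
  induction As with
  | nil => simp [cutPoints]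
  | cons A As ih =>
    cases As with
    | nil => simp [cutPoints]
    | cons A' T =>
      simp only [cutPoints, List.pairwise_cons, List.mem_map, List.pairwise_map] at ih ⊢
      exact ⟨by rintro _ ⟨x, -, rfl⟩; omega, ih.imp (by omega)⟩

theorem mem_cutPoints_iff {As : List (List Bool)} {bs : List Bool}
    (hlen : As.length = bs.length + 1) (halt : ∀ A ∈ As, Alt A)
    (hc : AvoidsCubes (glue As bs)) (p : ℕ) :
    p ∈ cutPoints As ↔ HasDoubleAt (glue As bs) p := by
  induction As generalizing bs p with
  | nil => simp at hlen
  | cons A As ih =>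
    match As, bs, hlen with
    | [], bs, _ =>
      have hglue : glue [A] bs = A := by cases bs <;> rfl
      simp only [cutPoints, List.not_mem_nil, false_iff, hglue]
      exact (halt A (by simp)).not_hasDoubleAt p
    | A' :: T, b :: bs, hlen =>
      have hglue : glue (A :: A' :: T) (b :: bs) = A ++ [b, b] ++ glue (A' :: T) bs := rfl
      rw [hglue] at hc ⊢
      have hcR : AvoidsCubes (glue (A' :: T) bs) :=
        ⟨fun h => hc.1 (h.trans (List.suffix_append _ _).isInfix),
          fun h => hc.2 (h.trans (List.suffix_append _ _).isInfix)⟩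
      simp only [cutPoints, List.mem_cons, List.mem_map,
        ih (by simpa using hlen) (fun X hX => halt X (by simp [hX])) hcR,
        hasDoubleAt_append_pair_iff (halt A (by simp)) hc]

theorem seqMid_eq_gapSeq {As : List (List Bool)} {bs : List Bool}
    (hlen : As.length = bs.length + 1) (c : ℕ) :
    seqMid As = gapSeq (c :: (cutPoints As).map (· + (c + 1)) ++ [c + 1 + (glue As bs).length]) := by
  induction As generalizing bs c with
  | nil => simp at hlen
  | cons A As ih =>
    match As, bs, hlen with
    | [], bs, _ =>
      have hglue : glue [A] bs = A := by cases bs <;> rfl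
      simp [seqMid, cutPoints, hglue, gapSeq]
      omega
    | A' :: T, b :: bs, hlen =>
      have hglue : glue (A :: A' :: T) (b :: bs) = A ++ [b, b] ++ glue (A' :: T) bs := rfl
      show (A.length + 2) :: seqMid (A' :: T) = _
      rw [ih (by simpa using hlen) (c + A.length + 2), hglue]
      simp only [cutPoints, List.map_cons, List.map_map, Function.comp_def, List.cons_append,
        gapSeq_cons_cons, List.length_append, List.length_cons, List.length_nil, List.cons.injEq]
      refine ⟨by omega, ?_⟩
      congr 2
      · omega
      · congr 1
        · exact List.map_congr_left fun x _ => by omega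
        · simp only [List.cons.injEq, and_true]
          omega

theorem seqOf_eq_gapSeq {As : List (List Bool)} {bs : List Bool}
    (hlen : As.length = bs.length + 1) (hne : glue As bs ≠ []) :
    seqOf As = gapSeq (0 :: cutPoints As ++ [(glue As bs).length]) := by
  match As, bs, hlen with
  | [A], bs, _ =>
    have hglue : glue [A] bs = A := by cases bs <;> rfl
    rw [hglue] at hne ⊢
    simp [seqOf, cutPoints, hne, gapSeq]
  | A :: A' :: T, b :: bs, hlen =>
    have hglue : glue (A :: A' :: T) (b :: bs) = A ++ [b, b] ++ glue (A' :: T) bs := rfl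
    show (A.length + 1) :: seqMid (A' :: T) = _
    rw [seqMid_eq_gapSeq (bs := bs) (by simpa using hlen) (A.length + 1), hglue]
    simp only [cutPoints, List.cons_append, gapSeq_cons_cons, List.length_append]
    congr 3

theorem isCutList_cutPoints {As : List (List Bool)} {bs : List Bool}
    (hlen : As.length = bs.length + 1) (halt : ∀ A ∈ As, Alt A)
    (hc : AvoidsCubes (glue As bs)) (hne : glue As bs ≠ []) :
    IsCutList (glue As bs) (0 :: cutPoints As ++ [(glue As bs).length]) := by
  have hmem := mem_cutPoints_iff hlen halt hc
  have hbound : ∀ p ∈ cutPoints As, 0 < p ∧ p < (glue As bs).length :=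
    fun p hp => ⟨((hmem p).1 hp).1, ((hmem p).1 hp).2.1⟩
  have hL : 0 < (glue As bs).length := List.length_pos_iff.2 hne
  refine ⟨?_, fun p => by simp [hmem]⟩
  simp only [List.cons_append, List.pairwise_cons, List.mem_append, List.mem_singleton,
    List.pairwise_append]
  refine ⟨?_, pairwise_cutPoints As, by simp, fun p hp _ h => h ▸ (hbound p hp).2⟩
  rintro p (hp | rfl)
  exacts [(hbound p hp).1, hL]

theorem stmt4_general (w : List Bool) (hc : AvoidsCubes w)
    (hnot : ¬ AvoidsP w) (As : List (List Bool)) (bs : List Bool)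
    (hf : IsFact As bs w) :
    (∃ j : ℕ, 1 ≤ j ∧ j + 1 < (seqOf As).length ∧
      (seqOf As).getD (j - 1) 0 ≥ (seqOf As).getD j 0 ∧
      (seqOf As).getD j 0 ≤ (seqOf As).getD (j + 1) 0) ∧ ¬ InX (seqOf As) := by
  obtain ⟨hlen, halt, rfl⟩ := hf
  obtain ⟨u, hu, s, t, hw⟩ := not_not.1 hnot
  have hne : glue As bs ≠ [] := by
    rw [← hw]
    simp [hu]
  have hcut := isCutList_cutPoints hlen halt hc hne
  obtain ⟨j, hj⟩ : ∃ j, IsValley (seqOf As) j := by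
    rw [seqOf_eq_gapSeq hlen hne]
    exact IsCutList.exists_isValley_gapSeq_of_pattern (by rwa [hw]) hu
  exact ⟨⟨j, hj⟩, fun hX => hX.2 j hj.1 hj.2.1 hj.2.2⟩

/-- If a word starting with `0`, avoiding `000` and `111`, contains an instance of
`x xᴿ x`, then its associated sequence has a valley, i.e. is not in `X`. -/
theorem stmt4 (w : List Bool) (h0 : w.head? = some false) (hc : AvoidsCubes w)
    (hnot : ¬ AvoidsP w) (As : List (List Bool)) (bs : List Bool)
    (hf : IsFact As bs w) :
    (∃ j : ℕ, 1 ≤ j ∧ j + 1 < (seqOf As).length ∧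
      (seqOf As).getD (j - 1) 0 ≥ (seqOf As).getD j 0 ∧
      (seqOf As).getD j 0 ≤ (seqOf As).getD (j + 1) 0) ∧ ¬ InX (seqOf As) :=
  stmt4_general w hc hnot As bs hf
end

section
/- Every sequence in X of weight n corresponds to at least one and at most two pairs (λ, μ) of strict partitions of numbers summing to n; consequently, if v(n) is the number of sequences in X of weight n ≥ 1 and ũ(n) is the number of pairs (λ, μ) of partitions into distinct parts with |λ| + |μ| = n, then ũ(n)/2 ≤ v(n) ≤ ũ(n). -/
/-- The sequence in `X` obtained from a pair of strict partitions:
`λ` increasing, then `μ` decreasing. -/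
def pairToSeq (p : Finset ℕ × Finset ℕ) : List ℕ :=
  p.1.sort (· ≤ ·) ++ (p.2.sort (· ≤ ·)).reverse


/-!
A sequence without valleys splits as `λ ++ μᴿ` with `λ` strictly increasing and `μᴿ` strictly
decreasing, so `(λ, μ) ↦ λ ++ μᴿ` maps the pairs of strict partitions of total weight `n` onto the
sequences in `X` of weight `n`. The possible lengths of `λ` in such a splitting are consecutive
integers (a strict ascent inside `λ` cannot sit at a strict descent inside `μᴿ`), so there are at
most two of them and the parity of `#λ` separates the pairs in a fibre: the map
`(λ, μ) ↦ (λ ++ μᴿ, #λ mod 2)` is injective.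
-/

theorem List.isChain_iff_getD {α : Type*} {R : α → α → Prop} (l : List α) (x : α) :
    l.IsChain R ↔ ∀ i, i + 1 < l.length → R (l.getD i x) (l.getD (i + 1) x) := by
  rw [List.isChain_iff_getElem]
  refine forall_congr' fun i => ⟨fun h hi => ?_, fun h hi => ?_⟩ <;>
    simpa only [List.getD_eq_getElem _ _ (by omega : i < l.length),
      List.getD_eq_getElem _ _ hi] using h hi

theorem List.SortedLT.sort_toFinset {α : Type*} [LinearOrder α] {l : List α} (hl : l.SortedLT) :
    l.toFinset.sort (· ≤ ·) = l :=
  (Finset.sortedLT_sort _).eq_of_mem_iff hl (by simp)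

theorem Finset.sum_sort_le_eq_sum_id {α : Type*} [LinearOrder α] [AddCommMonoid α]
    (s : Finset α) : (s.sort (· ≤ ·)).sum = s.sum id := by
  rw [← Multiset.sum_coe, Finset.sort_eq, Finset.sum, Multiset.map_id]

theorem Finset.subset_range_of_sum_id_le {s : Finset ℕ} {n : ℕ} (hs : s.sum id ≤ n) :
    s ⊆ Finset.range (n + 1) := fun x hx =>
  Finset.mem_range_succ_iff.mpr ((Finset.single_le_sum (f := id) (by simp) hx).trans hs)

/-- `d = λ ++ μᴿ` with `λ = d.take k` strictly increasing and `μᴿ = d.drop k` strictly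
decreasing. -/
def IsSplitAt (d : List ℕ) (k : ℕ) : Prop :=
  k ≤ d.length ∧ (∀ i, i + 1 < k → d.getD i 0 < d.getD (i + 1) 0) ∧
    ∀ i, k ≤ i → i + 1 < d.length → d.getD (i + 1) 0 < d.getD i 0

namespace IsSplitAt

variable {d : List ℕ} {k : ℕ}

theorem noValley (h : IsSplitAt d k) : NoValley d := by
  intro j hj hjd ⟨hge, hle⟩
  rcases Nat.lt_or_ge j k with hjk | hjk
  · have := h.2.1 (j - 1) (by omega)
    rw [Nat.sub_add_cancel hj] at this
    omega
  · have := h.2.2 j hjk hjd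
    omega

theorem le_succ {k' : ℕ} (h : IsSplitAt d k) (h' : IsSplitAt d k') : k' ≤ k + 1 := by
  by_contra! hk'
  have := h'.2.1 k (by omega)
  have := h.2.2 k le_rfl (by have := h'.1; omega)
  omega

theorem iff_sortedLT_take_sortedGT_drop (hk : k ≤ d.length) :
    IsSplitAt d k ↔ (d.take k).SortedLT ∧ (d.drop k).SortedGT := by
  have htake : ∀ i, i < k → (d.take k).getD i 0 = d.getD i 0 := fun i hi => by
    simp [List.getD_eq_getElem?_getD, hi]
  have hdrop : ∀ i, (d.drop k).getD i 0 = d.getD (k + i) 0 := fun i => by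
    simp [List.getD_eq_getElem?_getD, List.getElem?_drop]
  rw [List.sortedLT_iff_isChain, List.sortedGT_iff_isChain, List.isChain_iff_getD _ 0,
    List.isChain_iff_getD _ 0, List.length_take_of_le hk, List.length_drop]
  constructor
  · rintro ⟨-, hinc, hdec⟩
    refine ⟨fun i hi => ?_, fun i hi => ?_⟩
    · rw [htake i (by omega), htake (i + 1) hi]
      exact hinc i hi
    · rw [hdrop, hdrop, ← add_assoc]
      exact hdec (k + i) (by omega) (by omega)
  · rintro ⟨hinc, hdec⟩
    refine ⟨hk, fun i hi => ?_, fun i hki hi => ?_⟩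
    · rw [← htake i (by omega), ← htake (i + 1) hi]
      exact hinc i hi
    · have := hdec (i - k) (by omega)
      rwa [hdrop, hdrop, ← add_assoc, Nat.add_sub_cancel' hki] at this

end IsSplitAt

/-- Once a sequence without valleys stops increasing, it strictly decreases. -/
theorem NoValley.getD_succ_lt_getD_of_le {d : List ℕ} (hd : NoValley d) {k : ℕ} (hk : 1 ≤ k)
    (hdesc : d.getD k 0 ≤ d.getD (k - 1) 0) :
    ∀ i, k ≤ i → i + 1 < d.length → d.getD (i + 1) 0 < d.getD i 0 := by
  intro i hki
  induction i, hki using Nat.le_induction with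
  | base => exact fun hkd => lt_of_not_ge fun h => hd k hk hkd ⟨hdesc, h⟩
  | succ i hki ih =>
    intro hid
    have hlt := ih (by omega)
    exact lt_of_not_ge fun h => hd (i + 1) (by omega) hid ⟨by rw [Nat.add_sub_cancel]; omega, h⟩

theorem NoValley.exists_isSplitAt {d : List ℕ} (hd : NoValley d) : ∃ k, IsSplitAt d k := by
  classical
  by_cases hinc : ∀ i, i + 1 < d.length → d.getD i 0 < d.getD (i + 1) 0
  · exact ⟨d.length, le_rfl, hinc, fun i hi hid => by omega⟩
  push Not at hinc
  obtain ⟨hid, hdesc⟩ := Nat.find_spec hinc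
  refine ⟨Nat.find hinc + 1, by omega, fun j hj => ?_,
    hd.getD_succ_lt_getD_of_le (by omega) (by simpa using hdesc)⟩
  have := Nat.find_min hinc (show j < Nat.find hinc by omega)
  push Not at this
  exact this (by omega)

theorem strictPartition_toFinset_of_pos {l : List ℕ} (hl : ∀ x ∈ l, 0 < x) :
    StrictPartition l.toFinset := fun h0 =>
  (hl 0 (List.mem_toFinset.mp h0)).false

theorem sum_pairToSeq (p : Finset ℕ × Finset ℕ) :
    (pairToSeq p).sum = p.1.sum id + p.2.sum id := by
  rw [pairToSeq, List.sum_append, List.sum_reverse, Finset.sum_sort_le_eq_sum_id,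
    Finset.sum_sort_le_eq_sum_id]

theorem isSplitAt_of_pairToSeq_eq {p : Finset ℕ × Finset ℕ} {d : List ℕ}
    (hd : pairToSeq p = d) :
    IsSplitAt d p.1.card ∧
      p = ((d.take p.1.card).toFinset, (d.drop p.1.card).reverse.toFinset) := by
  have hlen : (p.1.sort (· ≤ ·)).length = p.1.card := Finset.length_sort _
  have htake : d.take p.1.card = p.1.sort (· ≤ ·) := by
    rw [← hd, pairToSeq, ← hlen, List.take_left]
  have hdrop : d.drop p.1.card = (p.2.sort (· ≤ ·)).reverse := by
    rw [← hd, pairToSeq, ← hlen, List.drop_left]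
  have hk : p.1.card ≤ d.length := by
    rw [← hd, pairToSeq, List.length_append, hlen]
    omega
  refine ⟨(IsSplitAt.iff_sortedLT_take_sortedGT_drop hk).mpr ⟨?_, ?_⟩, ?_⟩
  · rw [htake]
    exact Finset.sortedLT_sort _
  · rw [hdrop, List.sortedGT_reverse]
    exact Finset.sortedLT_sort _
  · rw [htake, hdrop, List.reverse_reverse, Finset.sort_toFinset, Finset.sort_toFinset]

theorem IsSplitAt.pairToSeq_toFinset_take_drop {d : List ℕ} {k : ℕ} (h : IsSplitAt d k) :
    pairToSeq ((d.take k).toFinset, (d.drop k).reverse.toFinset) = d := by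
  obtain ⟨hinc, hdec⟩ := (IsSplitAt.iff_sortedLT_take_sortedGT_drop h.1).mp h
  rw [pairToSeq, hinc.sort_toFinset, (List.sortedLT_reverse.mpr hdec).sort_toFinset,
    List.reverse_reverse, List.take_append_drop]

theorem inX_pairToSeq {p : Finset ℕ × Finset ℕ} (h1 : StrictPartition p.1)
    (h2 : StrictPartition p.2) : InX (pairToSeq p) := by
  refine ⟨fun x hx => Nat.pos_of_ne_zero ?_, (isSplitAt_of_pairToSeq_eq rfl).1.noValley⟩
  rintro rfl
  rw [pairToSeq, List.mem_append, List.mem_reverse, Finset.mem_sort, Finset.mem_sort] at hx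
  exact hx.elim h1 h2

theorem exists_pairToSeq_eq {d : List ℕ} (hd : InX d) :
    ∃ p : Finset ℕ × Finset ℕ, StrictPartition p.1 ∧ StrictPartition p.2 ∧ pairToSeq p = d := by
  obtain ⟨k, hk⟩ := hd.2.exists_isSplitAt
  exact ⟨_, strictPartition_toFinset_of_pos fun x hx => hd.1 x (List.mem_of_mem_take hx),
    strictPartition_toFinset_of_pos fun x hx =>
      hd.1 x (List.mem_of_mem_drop (List.mem_reverse.mp hx)),
    hk.pairToSeq_toFinset_take_drop⟩

theorem eq_of_pairToSeq_eq_of_card_cast_eq {p q : Finset ℕ × Finset ℕ} {d : List ℕ}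
    (hp : pairToSeq p = d) (hq : pairToSeq q = d) (hcard : (p.1.card : ZMod 2) = q.1.card) :
    p = q := by
  obtain ⟨hp, hp_eq⟩ := isSplitAt_of_pairToSeq_eq hp
  obtain ⟨hq, hq_eq⟩ := isSplitAt_of_pairToSeq_eq hq
  rw [ZMod.natCast_eq_natCast_iff'] at hcard
  have : p.1.card = q.1.card := by
    have := hp.le_succ hq
    have := hq.le_succ hp
    omega
  rw [hp_eq, hq_eq, this]

abbrev StrictPairsOfSeq (d : List ℕ) : Type :=
  {p : Finset ℕ × Finset ℕ // StrictPartition p.1 ∧ StrictPartition p.2 ∧ pairToSeq p = d}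

theorem injective_card_cast_strictPairsOfSeq (d : List ℕ) :
    Function.Injective fun p : StrictPairsOfSeq d => (p.1.1.card : ZMod 2) := fun p q h =>
  Subtype.ext (eq_of_pairToSeq_eq_of_card_cast_eq p.2.2.2 q.2.2.2 h)

theorem card_strictPairsOfSeq_le_two (d : List ℕ) : Nat.card (StrictPairsOfSeq d) ≤ 2 :=
  (Nat.card_le_card_of_injective _ (injective_card_cast_strictPairsOfSeq d)).trans_eq
    (Nat.card_zmod 2)

theorem one_le_card_strictPairsOfSeq {d : List ℕ} (hd : InX d) :
    1 ≤ Nat.card (StrictPairsOfSeq d) := by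
  have : Finite (StrictPairsOfSeq d) :=
    Finite.of_injective _ (injective_card_cast_strictPairsOfSeq d)
  obtain ⟨p, hp⟩ := exists_pairToSeq_eq hd
  have : Nonempty (StrictPairsOfSeq d) := ⟨⟨p, hp⟩⟩
  exact Nat.card_pos

abbrev StrictPairsOfWeight (n : ℕ) : Type :=
  {p : Finset ℕ × Finset ℕ //
    StrictPartition p.1 ∧ StrictPartition p.2 ∧ p.1.sum id + p.2.sum id = n}

abbrev SeqsOfWeight (n : ℕ) : Type := {d : List ℕ // InX d ∧ d.sum = n}

instance (n : ℕ) : Finite (StrictPairsOfWeight n) := by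
  refine Set.Finite.to_subtype (((Finset.range (n + 1)).powerset ×ˢ
    (Finset.range (n + 1)).powerset).finite_toSet.subset fun p hp => ?_)
  simp only [Finset.coe_product, Set.mem_prod, Finset.mem_coe, Finset.mem_powerset]
  exact ⟨Finset.subset_range_of_sum_id_le (by have := hp.2.2; omega),
    Finset.subset_range_of_sum_id_le (by have := hp.2.2; omega)⟩

def pairToSeqOfWeight (n : ℕ) (p : StrictPairsOfWeight n) : SeqsOfWeight n :=
  ⟨pairToSeq p.1, inX_pairToSeq p.2.1 p.2.2.1, (sum_pairToSeq _).trans p.2.2.2⟩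

theorem pairToSeqOfWeight_surjective (n : ℕ) : Function.Surjective (pairToSeqOfWeight n) := by
  rintro ⟨d, hd, rfl⟩
  obtain ⟨p, h1, h2, rfl⟩ := exists_pairToSeq_eq hd
  exact ⟨⟨p, h1, h2, (sum_pairToSeq p).symm⟩, rfl⟩

theorem injective_pairToSeqOfWeight_card_cast (n : ℕ) :
    Function.Injective fun p : StrictPairsOfWeight n =>
      (pairToSeqOfWeight n p, (p.1.1.card : ZMod 2)) := fun p q h => by
  simp only [Prod.mk.injEq] at h
  exact Subtype.ext (eq_of_pairToSeq_eq_of_card_cast_eq (congrArg Subtype.val h.1) rfl h.2)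

theorem stmt6_general (n : ℕ) :
    (∀ d : List ℕ, InX d → d.sum = n →
      1 ≤ Nat.card {p : Finset ℕ × Finset ℕ //
            StrictPartition p.1 ∧ StrictPartition p.2 ∧ pairToSeq p = d} ∧
      Nat.card {p : Finset ℕ × Finset ℕ //
            StrictPartition p.1 ∧ StrictPartition p.2 ∧ pairToSeq p = d} ≤ 2) ∧
    utilde n ≤ 2 * v n ∧ v n ≤ utilde n := by
  refine ⟨fun d hd _ => ⟨one_le_card_strictPairsOfSeq hd, card_strictPairsOfSeq_le_two d⟩,
    ?_, Nat.card_le_card_of_surjective _ (pairToSeqOfWeight_surjective n)⟩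
  have : Finite (SeqsOfWeight n) := .of_surjective _ (pairToSeqOfWeight_surjective n)
  calc utilde n ≤ Nat.card (SeqsOfWeight n × ZMod 2) :=
        Nat.card_le_card_of_injective _ (injective_pairToSeqOfWeight_card_cast n)
    _ = 2 * v n := by rw [Nat.card_prod, Nat.card_zmod, mul_comm]; rfl

/-- Every sequence in `X` of weight `n` arises from at least one and at most two pairs of
strict partitions of total weight `n`; consequently `ũ(n)/2 ≤ v(n) ≤ ũ(n)`. -/
theorem stmt6 (n : ℕ) (hn : 1 ≤ n) :
    (∀ d : List ℕ, InX d → d.sum = n →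
      1 ≤ Nat.card {p : Finset ℕ × Finset ℕ //
            StrictPartition p.1 ∧ StrictPartition p.2 ∧ pairToSeq p = d} ∧
      Nat.card {p : Finset ℕ × Finset ℕ //
            StrictPartition p.1 ∧ StrictPartition p.2 ∧ pairToSeq p = d} ≤ 2) ∧
    utilde n ≤ 2 * v n ∧ v n ≤ utilde n :=
  stmt6_general n
end

section
/- The language {a^i b^j c^k d^ℓ : (i < j or k < j) and (j < k or ℓ < k)} over the alphabet {a,b,c,d} is not context-free. -/
/-!
Only a weak form of Ogden's lemma is needed, in which the marked positions are the occurrences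
of one letter and nothing bounds the marks in `vwx`. It comes from parse trees: let `k ≥ 2` bound
the right-hand sides of the rules and `m` be the number of nonterminals. Walking down from the
root, always into the child carrying the most marks, the number of marks drops at most by a factor
`k` at each node where it drops at all, so a yield with `k ^ (m + 1)` marks forces `m + 1` such
nodes on the path, two of which carry the same nonterminal; the part of the tree between them
can be pumped.

For the language, mark the `b`'s of `a^p b^(p+1) c^(p+2) d^(p+2)`. Every word of the language is
sorted, so after pumping `v` and `x` are each powers of a single letter, and `vx` contains `b`'s
and at most one other letter. If that letter is `c` or `d`, pumping down violates one of the two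
conditions; otherwise pumping up leaves at least as many `b`'s as
`c`'s, and as many `c`'s as `d`'s.
-/

lemma List.exists_mem_sum_map_le_length_mul {α : Type*} (f : α → ℕ) {l : List α} (hl : l ≠ []) :
    ∃ c ∈ l, (l.map f).sum ≤ l.length * f c := by
  obtain ⟨c, hc⟩ := Option.ne_none_iff_exists'.mp (List.argmax_eq_none (f := f).not.mpr hl)
  refine ⟨c, List.argmax_mem hc, ?_⟩
  simpa using List.sum_le_card_nsmul (l.map f) (f c) fun _ hx ↦ by
    obtain ⟨x, hx', rfl⟩ := List.mem_map.mp hx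
    exact List.le_of_mem_argmax hx' hc

lemma List.exists_pair_sublist_map_eq {α β : Type*} [DecidableEq β] {f : α → β} {l : List α}
    {F : Finset β} (hF : ∀ x ∈ l, f x ∈ F) (hlen : F.card < l.length) :
    ∃ x y, [x, y].Sublist l ∧ f x = f y := by
  by_contra! hne
  have hnodup : (l.map f).Nodup := List.nodup_iff_sublist.mpr fun b hb ↦ by
    obtain ⟨l', hl', hmap⟩ := List.sublist_map_iff.mp hb
    obtain ⟨x, y, rfl⟩ : ∃ x y, l' = [x, y] := by
      rcases l' with _ | ⟨x, _ | ⟨y, _ | _⟩⟩ <;> simp at hmap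
      exact ⟨x, y, rfl⟩
    simp only [List.map_cons, List.map_nil, List.cons.injEq, and_true] at hmap
    exact hne x y hl' (hmap.1.symm.trans hmap.2)
  have hsub : (l.map f).toFinset ⊆ F := fun b hb ↦ by
    obtain ⟨x, hx, rfl⟩ := List.mem_map.mp (List.mem_toFinset.mp hb)
    exact hF x hx
  have := Finset.card_le_card hsub
  rw [List.toFinset_card_of_nodup hnodup, List.length_map] at this
  omega

lemma List.count_pumped {α : Type*} [BEq α] [LawfulBEq α] (a : α) (u v w x y : List α) (n : ℕ) :
    (u ++ (List.replicate n v).flatten ++ w ++ (List.replicate n x).flatten ++ y).count a =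
      (u ++ w ++ y).count a + n * (v ++ x).count a := by
  simp only [List.append_assoc, List.count_append, List.count_flatten, List.map_replicate,
    List.sum_replicate, smul_eq_mul]
  ring

lemma List.Pairwise.eq_of_append_self {α : Type*} [PartialOrder α] {l : List α}
    (h : (l ++ l).Pairwise (· ≤ ·)) {a b : α} (ha : a ∈ l) (hb : b ∈ l) : a = b :=
  (List.pairwise_append.mp h).2.2 a ha b hb |>.antisymm ((List.pairwise_append.mp h).2.2 b hb a ha)

lemma List.count_append_eq_zero_of_three_ne {α : Type*} [DecidableEq α] {v x : List α}
    (hv : ∀ a ∈ v, ∀ b ∈ v, a = b) (hx : ∀ a ∈ x, ∀ b ∈ x, a = b) {c₁ c₂ c₃ : α}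
    (h₁₂ : c₁ ≠ c₂) (h₁₃ : c₁ ≠ c₃) (h₂₃ : c₂ ≠ c₃) :
    (v ++ x).count c₁ = 0 ∨ (v ++ x).count c₂ = 0 ∨ (v ++ x).count c₃ = 0 := by
  simp only [List.count_eq_zero, List.mem_append]
  grind

inductive ParseTree (T N : Type*) where
  | leaf : T → ParseTree T N
  | node : N → List (ParseTree T N) → ParseTree T N

namespace ParseTree

variable {T N : Type*}

def symbol : ParseTree T N → Symbol T N
  | leaf t => .terminal t
  | node A _ => .nonterminal A

def yield : ParseTree T N → List T
  | leaf t => [t]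
  | node _ ts => ts.attach.flatMap fun c => c.1.yield
decreasing_by
  have := List.sizeOf_lt_of_mem c.2
  simp only [node.sizeOf_spec]
  omega

@[simp] lemma yield_leaf (t : T) : (leaf t : ParseTree T N).yield = [t] := by
  rw [yield]

@[simp] lemma yield_node (A : N) (ts : List (ParseTree T N)) :
    (node A ts).yield = (ts.map yield).flatten := by
  rw [yield]
  simp [List.flatMap]

inductive IsSubtree : ParseTree T N → ParseTree T N → Prop
  | refl (t : ParseTree T N) : IsSubtree t t
  | child {s c : ParseTree T N} {A : N} {ts : List (ParseTree T N)} :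
      c ∈ ts → IsSubtree s c → IsSubtree s (node A ts)

lemma IsSubtree.trans {s t t' : ParseTree T N} (h : s.IsSubtree t) (h' : t.IsSubtree t') :
    s.IsSubtree t' := by
  induction h' with
  | refl => exact h
  | child hc _ ih => exact .child hc ih

section Count

variable [DecidableEq T] (a : T)

lemma count_yield_leaf_le_one (x : T) : (leaf x : ParseTree T N).yield.count a ≤ 1 := by
  simpa using List.count_le_length (a := a) (l := [x])

lemma exists_mem_count_yield_le_mul (A : N) {ts : List (ParseTree T N)} (hts : ts ≠ []) :
    ∃ c ∈ ts, c.yield.count a ≤ (node A ts).yield.count a ∧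
      (node A ts).yield.count a ≤ ts.length * c.yield.count a := by
  have hcount : (node A ts).yield.count a = (ts.map (·.yield.count a)).sum := by
    simp [List.count_flatten, Function.comp_def]
  obtain ⟨c, hc, hmax⟩ := List.exists_mem_sum_map_le_length_mul (·.yield.count a) hts
  exact ⟨c, hc, hcount ▸ List.le_sum_of_mem (List.mem_map_of_mem hc), hcount ▸ hmax⟩

end Count

end ParseTree

namespace ContextFreeGrammar

open ParseTree

variable {T : Type*} {g : ContextFreeGrammar T}

inductive IsParseTree (g : ContextFreeGrammar T) : ParseTree T g.NT → Prop
  | leaf (t : T) : IsParseTree g (.leaf t)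
  | node (r : ContextFreeRule T g.NT) (ts : List (ParseTree T g.NT)) (hr : r ∈ g.rules)
      (hout : r.output = ts.map symbol) (hts : ∀ t ∈ ts, IsParseTree g t) :
      IsParseTree g (.node r.input ts)

lemma IsParseTree.of_isSubtree {s t : ParseTree T g.NT} (ht : g.IsParseTree t)
    (hs : s.IsSubtree t) : g.IsParseTree s := by
  induction hs with
  | refl => exact ht
  | child hc _ ih =>
    cases ht with
    | node r ts hr hout hts => exact ih (hts _ hc)

lemma produces_symbol_node {r : ContextFreeRule T g.NT} {ts : List (ParseTree T g.NT)}
    (hr : r ∈ g.rules) (hout : r.output = ts.map symbol) :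
    g.Produces [(ParseTree.node r.input ts).symbol] (ts.map symbol) :=
  ⟨r, hr, hout ▸ ContextFreeRule.Rewrites.input_output⟩

lemma derives_map_symbol {ts : List (ParseTree T g.NT)}
    (h : ∀ t ∈ ts, g.Derives [t.symbol] (t.yield.map .terminal)) :
    g.Derives (ts.map symbol) ((ts.map yield).flatten.map .terminal) := by
  induction ts with
  | nil => rfl
  | cons t ts ih =>
    have ht := (h t (by simp)).append_right (ts.map symbol)
    have hts := (ih fun t' h' ↦ h t' (by simp [h'])).append_left (t.yield.map .terminal)
    simpa using ht.trans hts

lemma IsParseTree.derives {t : ParseTree T g.NT} (ht : g.IsParseTree t) :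
    g.Derives [t.symbol] (t.yield.map .terminal) := by
  induction ht with
  | leaf => simpa [symbol] using Derives.refl _
  | node r ts hr hout _ ih =>
    simpa using (produces_symbol_node hr hout).trans_derives (derives_map_symbol ih)

lemma exists_parseTrees_of_derives {s : List (Symbol T g.NT)} {z : List T}
    (h : g.Derives s (z.map .terminal)) :
    ∃ ts : List (ParseTree T g.NT), ts.map symbol = s ∧ (ts.map yield).flatten = z ∧
      ∀ t ∈ ts, g.IsParseTree t := by
  induction h using Relation.ReflTransGen.head_induction_on with
  | refl =>
    refine ⟨z.map leaf, by simp [Function.comp_def, symbol], ?_, by simp [IsParseTree.leaf]⟩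
    simp [Function.comp_def, ← List.flatMap_def]
  | head hstep _ ih =>
    obtain ⟨r, hr, hrw⟩ := hstep
    obtain ⟨p, q, rfl, rfl⟩ := hrw.exists_parts
    obtain ⟨ts, hsym, hyield, hts⟩ := ih
    obtain ⟨ts₁₂, ts₃, rfl, h₁₂, rfl⟩ := List.map_eq_append_iff.mp hsym
    obtain ⟨ts₁, ts₂, rfl, rfl, hout⟩ := List.map_eq_append_iff.mp h₁₂
    refine ⟨ts₁ ++ [node r.input ts₂] ++ ts₃, by simp [symbol], by simpa using hyield, ?_⟩
    simp only [List.mem_append, List.mem_singleton]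
    rintro t ((ht | rfl) | ht)
    · exact hts t (by simp [ht])
    · exact .node r ts₂ hr hout.symm fun t ht ↦ hts t (by simp [ht])
    · exact hts t (by simp [ht])

lemma exists_parseTree_of_mem_language {z : List T} (hz : z ∈ g.language) :
    ∃ t : ParseTree T g.NT, g.IsParseTree t ∧ t.symbol = .nonterminal g.initial ∧ t.yield = z := by
  obtain ⟨ts, hsym, hyield, hts⟩ := exists_parseTrees_of_derives ((mem_language_iff g z).mp hz)
  obtain ⟨t, rfl⟩ : ∃ t, ts = [t] := by
    rcases ts with _ | ⟨t, _ | _⟩ <;> simp at hsym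
    exact ⟨t, rfl⟩
  exact ⟨t, hts t (by simp), by simpa using hsym, by simpa using hyield⟩

lemma IsParseTree.derives_of_isSubtree {s t : ParseTree T g.NT} (ht : g.IsParseTree t)
    (hs : s.IsSubtree t) :
    ∃ u x : List T, t.yield = u ++ s.yield ++ x ∧
      g.Derives [t.symbol] (u.map .terminal ++ [s.symbol] ++ x.map .terminal) := by
  induction hs with
  | refl => exact ⟨[], [], by simp, by simp; rfl⟩
  | @child c A ts hc _ ih =>
    cases ht with
    | node r ts hr hout hts =>
      obtain ⟨u, x, hyield, hder⟩ := ih (hts c hc)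
      obtain ⟨l₁, l₂, rfl⟩ := List.append_of_mem hc
      have hside : ∀ l ⊆ l₁ ++ c :: l₂,
          g.Derives (l.map symbol) ((l.map yield).flatten.map .terminal) :=
        fun l hl ↦ derives_map_symbol fun t ht ↦ (hts t (hl ht)).derives
      refine ⟨(l₁.map yield).flatten ++ u, x ++ (l₂.map yield).flatten, by simp [hyield], ?_⟩
      refine (produces_symbol_node hr hout).trans_derives ?_
      have hleft := ((hside l₁ (by simp)).append_right _).trans (hder.append_left _)
      simpa using (hleft.append_right (l₂.map symbol)).trans ((hside l₂ (by simp)).append_left _)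

lemma derives_pump {σ : Symbol T g.NT} {v w x : List T}
    (hloop : g.Derives [σ] (v.map .terminal ++ [σ] ++ x.map .terminal))
    (hw : g.Derives [σ] (w.map .terminal)) (n : ℕ) :
    g.Derives [σ]
      (((List.replicate n v).flatten ++ w ++ (List.replicate n x).flatten).map .terminal) := by
  induction n with
  | zero => simpa using hw
  | succ n ih =>
    refine hloop.trans ?_
    rw [List.replicate_succ, List.replicate_succ']
    simpa using (ih.append_left (v.map .terminal)).append_right (x.map .terminal)

lemma IsParseTree.pump {t s s' : ParseTree T g.NT} (ht : g.IsParseTree t)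
    (hroot : t.symbol = .nonterminal g.initial) (hs : s.IsSubtree t) (hs' : s'.IsSubtree s)
    (hsym : s'.symbol = s.symbol) :
    ∃ u v x y : List T, t.yield = u ++ v ++ s'.yield ++ x ++ y ∧ s.yield = v ++ s'.yield ++ x ∧
      ∀ n, u ++ (List.replicate n v).flatten ++ s'.yield ++ (List.replicate n x).flatten ++ y ∈
        g.language := by
  obtain ⟨u, y, ht_yield, hder⟩ := ht.derives_of_isSubtree hs
  obtain ⟨v, x, hs_yield, hloop⟩ := (ht.of_isSubtree hs).derives_of_isSubtree hs'
  rw [hsym] at hloop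
  have hw := hsym ▸ ((ht.of_isSubtree hs).of_isSubtree hs').derives
  refine ⟨u, v, x, y, by simp [ht_yield, hs_yield], hs_yield, fun n ↦ ?_⟩
  rw [mem_language_iff, ← hroot]
  have hmid := ((derives_pump hloop hw n).append_left (u.map .terminal)).append_right
    (y.map .terminal)
  simpa using hder.trans hmid

section Marked

variable [DecidableEq T] (a : T)

lemma IsParseTree.exists_mem_rules_of_one_lt_count {s : ParseTree T g.NT} (hs : g.IsParseTree s)
    (hmarked : 1 < s.yield.count a) :
    ∃ r ∈ g.rules, s.symbol = .nonterminal r.input := by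
  cases hs with
  | leaf x => exact absurd hmarked (count_yield_leaf_le_one (N := g.NT) a x).not_gt
  | node r ts hr _ _ => exact ⟨r, hr, rfl⟩

lemma IsParseTree.exists_chain {k : ℕ} (hk : 2 ≤ k)
    (hrules : ∀ r ∈ g.rules, r.output.length ≤ k) {t : ParseTree T g.NT} (ht : g.IsParseTree t)
    (d : ℕ) (hd : k ^ (d + 1) ≤ t.yield.count a) :
    ∃ l : List (ParseTree T g.NT), l.length = d ∧
      (t :: l).Pairwise (fun s s' ↦ s'.IsSubtree s ∧ s'.yield.count a < s.yield.count a) ∧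
      ∀ s ∈ t :: l, 2 ≤ s.yield.count a := by
  have hk2 : ∀ d, 2 ≤ k ^ (d + 1) := fun d ↦ hk.trans (Nat.le_self_pow (by omega) k)
  induction ht generalizing d with
  | leaf x =>
    have := count_yield_leaf_le_one (N := g.NT) a x
    have := hk2 d
    omega
  | node r ts hr hout _ ih =>
    set t := ParseTree.node r.input ts
    obtain _ | d := d
    · exact ⟨[], rfl, List.pairwise_singleton _ _, by simpa using (hk2 0).trans hd⟩
    have hts : ts ≠ [] := by
      rintro rfl
      have := hk2 (d + 1)
      simp [t] at hd
      omega
    obtain ⟨c, hc, hcle, hmax⟩ := exists_mem_count_yield_le_mul a r.input hts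
    have hlen : ts.length ≤ k := by simpa [hout] using hrules r hr
    have hct : c.IsSubtree t := .child hc (.refl c)
    rcases hcle.lt_or_eq with hlt | heq
    · have hcbig : k ^ (d + 1) ≤ c.yield.count a := by
        refine Nat.le_of_mul_le_mul_left ?_ (by omega : 0 < k)
        calc k * k ^ (d + 1) = k ^ (d + 2) := by ring
          _ ≤ t.yield.count a := hd
          _ ≤ ts.length * c.yield.count a := hmax
          _ ≤ k * c.yield.count a := Nat.mul_le_mul_right _ hlen
      obtain ⟨l, hl, hpw, hbig⟩ := ih c hc d hcbig
      refine ⟨c :: l, by simp [hl], List.pairwise_cons.2 ⟨fun s hs ↦ ?_, hpw⟩, fun s hs ↦ ?_⟩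
      · rcases List.mem_cons.mp hs with rfl | hs
        · exact ⟨hct, hlt⟩
        · obtain ⟨hsc, hsc'⟩ := List.rel_of_pairwise_cons hpw hs
          exact ⟨hsc.trans hct, hsc'.trans hlt⟩
      · rcases List.mem_cons.mp hs with rfl | hs
        · exact (hk2 _).trans hd
        · exact hbig s hs
    · obtain ⟨l, hl, hpw, hbig⟩ := ih c hc (d + 1) (heq ▸ hd)
      refine ⟨l, hl, List.pairwise_cons.2 ⟨fun s hs ↦ ?_, hpw.of_cons⟩, fun s hs ↦ ?_⟩
      · obtain ⟨hsc, hsc'⟩ := List.rel_of_pairwise_cons hpw hs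
        exact ⟨hsc.trans hct, heq ▸ hsc'⟩
      · rcases List.mem_cons.mp hs with rfl | hs
        · exact (hk2 _).trans hd
        · exact hbig s (List.mem_cons_of_mem c hs)

end Marked

end ContextFreeGrammar

theorem Language.IsContextFree.exists_pumping_of_count_le {T : Type*} [DecidableEq T]
    {L : Language T} (hL : L.IsContextFree) (a : T) :
    ∃ p : ℕ, ∀ z ∈ L, p ≤ z.count a →
      ∃ u v w x y : List T, z = u ++ v ++ w ++ x ++ y ∧ 0 < (v ++ x).count a ∧
        ∀ n : ℕ,
          u ++ (List.replicate n v).flatten ++ w ++ (List.replicate n x).flatten ++ y ∈ L := by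
  classical
  obtain ⟨g, rfl⟩ := hL
  let k := (g.rules.sup fun r ↦ r.output.length) + 2
  have hrules : ∀ r ∈ g.rules, r.output.length ≤ k := fun r hr ↦
    (Finset.le_sup (f := fun r ↦ r.output.length) hr).trans (by omega)
  let F := g.rules.image fun r ↦ (Symbol.nonterminal r.input : Symbol T g.NT)
  refine ⟨k ^ (F.card + 1), fun z hz hcount ↦ ?_⟩
  obtain ⟨t, ht, hroot, rfl⟩ := ContextFreeGrammar.exists_parseTree_of_mem_language hz
  obtain ⟨l, hl, hpw, hbig⟩ := ht.exists_chain a (by omega) hrules F.card hcount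
  have hsub : ∀ s ∈ t :: l, s.IsSubtree t := by
    rintro s (_ | ⟨_, hs⟩)
    · exact .refl t
    · exact (List.rel_of_pairwise_cons hpw hs).1
  have hF : ∀ s ∈ t :: l, s.symbol ∈ F := fun s hs ↦ by
    obtain ⟨r, hr, hsym⟩ :=
      (ht.of_isSubtree (hsub s hs)).exists_mem_rules_of_one_lt_count a (hbig s hs)
    exact hsym ▸ Finset.mem_image_of_mem _ hr
  obtain ⟨s, s', hss', hsym⟩ := List.exists_pair_sublist_map_eq hF (by simp [hl])
  obtain ⟨hs's, hlt⟩ := List.pairwise_pair.mp (hpw.sublist hss')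
  obtain ⟨u, v, x, y, hz, hsy, hpump⟩ :=
    ht.pump hroot (hsub s (hss'.subset (by simp))) hs's hsym.symm
  refine ⟨u, v, s'.yield, x, y, hz, ?_, hpump⟩
  rw [hsy] at hlt
  simp only [List.count_append] at hlt ⊢
  omega

/-- The letters `a, b, c, d` are `0, 1, 2, 3`. -/
def abcdWord (i j k l : ℕ) : List (Fin 4) :=
  List.replicate i 0 ++ List.replicate j 1 ++ List.replicate k 2 ++ List.replicate l 3

def AbcdCond (m : Fin 4 → ℕ) : Prop :=
  (m 0 < m 1 ∨ m 2 < m 1) ∧ (m 1 < m 2 ∨ m 3 < m 2)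

def abcdLanguage : Language (Fin 4) :=
  {z | ∃ i j k l : ℕ, z = abcdWord i j k l ∧ (i < j ∨ k < j) ∧ (j < k ∨ l < k)}

lemma pairwise_le_abcdWord (i j k l : ℕ) : (abcdWord i j k l).Pairwise (· ≤ ·) := by
  grind [abcdWord]

lemma count_abcdWord (i j k l : ℕ) :
    (abcdWord i j k l).count 0 = i ∧ (abcdWord i j k l).count 1 = j ∧
      (abcdWord i j k l).count 2 = k ∧ (abcdWord i j k l).count 3 = l := by
  simp [abcdWord, List.count_replicate]

lemma pairwise_le_of_mem_abcdLanguage {z : List (Fin 4)} (hz : z ∈ abcdLanguage) :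
    z.Pairwise (· ≤ ·) := by
  obtain ⟨i, j, k, l, rfl, -⟩ := hz
  exact pairwise_le_abcdWord i j k l

lemma abcdCond_count_of_mem_abcdLanguage {z : List (Fin 4)} (hz : z ∈ abcdLanguage) :
    AbcdCond (z.count ·) := by
  obtain ⟨i, j, k, l, rfl, h⟩ := hz
  obtain ⟨h0, h1, h2, h3⟩ := count_abcdWord i j k l
  simpa [AbcdCond, h0, h1, h2, h3] using h

lemma not_abcdCond_pump_zero_and_two {e d : Fin 4 → ℕ} (p : ℕ) (h0 : e 0 + d 0 = p)
    (h1 : e 1 + d 1 = p + 1) (h2 : e 2 + d 2 = p + 2) (h3 : e 3 + d 3 = p + 2) (hd1 : 0 < d 1)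
    (hthree : ∀ c₁ c₂ c₃ : Fin 4, c₁ ≠ c₂ → c₁ ≠ c₃ → c₂ ≠ c₃ → d c₁ = 0 ∨ d c₂ = 0 ∨ d c₃ = 0)
    (hcond₀ : AbcdCond e) (hcond₂ : AbcdCond fun c ↦ e c + 2 * d c) : False := by
  have := hthree 0 1 2 (by decide) (by decide) (by decide)
  have := hthree 0 1 3 (by decide) (by decide) (by decide)
  have := hthree 1 2 3 (by decide) (by decide) (by decide)
  simp only [AbcdCond] at hcond₀ hcond₂
  omega

lemma not_forall_pump_mem_abcdLanguage {p : ℕ} {u v w x y : List (Fin 4)}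
    (hZ : abcdWord p (p + 1) (p + 2) (p + 2) = u ++ v ++ w ++ x ++ y)
    (hmarked : 0 < (v ++ x).count 1) :
    ¬ ∀ n : ℕ, u ++ (List.replicate n v).flatten ++ w ++ (List.replicate n x).flatten ++ y ∈
      abcdLanguage := by
  intro hpump
  have hsorted := pairwise_le_of_mem_abcdLanguage (hpump 2)
  have hv : ∀ a ∈ v, ∀ b ∈ v, a = b := fun a ha b hb ↦
    (hsorted.sublist (by simp [List.replicate_succ])).eq_of_append_self ha hb
  have hx : ∀ a ∈ x, ∀ b ∈ x, a = b := fun a ha b hb ↦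
    (hsorted.sublist (by simpa [List.replicate_succ] using
      (List.infix_append (u ++ v ++ v ++ w) (x ++ x) y).sublist)).eq_of_append_self ha hb
  have hsplit : ∀ c, (u ++ w ++ y).count c + (v ++ x).count c =
      (abcdWord p (p + 1) (p + 2) (p + 2)).count c := fun c ↦ by
    rw [hZ]
    simp only [List.count_append]
    omega
  obtain ⟨h0, h1, h2, h3⟩ := count_abcdWord p (p + 1) (p + 2) (p + 2)
  have hcond₀ := abcdCond_count_of_mem_abcdLanguage (hpump 0)
  have hcond₂ := abcdCond_count_of_mem_abcdLanguage (hpump 2)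
  simp only [List.count_pumped, zero_mul, add_zero] at hcond₀ hcond₂
  exact not_abcdCond_pump_zero_and_two p (h0 ▸ hsplit 0) (h1 ▸ hsplit 1) (h2 ▸ hsplit 2)
    (h3 ▸ hsplit 3) hmarked (fun _ _ _ ↦ List.count_append_eq_zero_of_three_ne hv hx) hcond₀ hcond₂

/-- The language `{aⁱ bʲ cᵏ dˡ : (i<j ∨ k<j) ∧ (j<k ∨ ℓ<k)}` is not context-free. -/
theorem stmt9 :
    ¬ Language.IsContextFree
      {z : List (Fin 4) | ∃ i j k l : ℕ,
        z = List.replicate i (0 : Fin 4) ++ List.replicate j 1 ++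
            List.replicate k 2 ++ List.replicate l 3 ∧
        (i < j ∨ k < j) ∧ (j < k ∨ l < k)} := by
  change ¬ abcdLanguage.IsContextFree
  intro hL
  obtain ⟨p, hp⟩ := hL.exists_pumping_of_count_le (1 : Fin 4)
  obtain ⟨u, v, w, x, y, hZ, hmarked, hpump⟩ := hp (abcdWord p (p + 1) (p + 2) (p + 2))
    ⟨_, _, _, _, rfl, by omega, by omega⟩ (by simp [(count_abcdWord _ _ _ _).2.1])
  exact not_forall_pump_mem_abcdLanguage hZ hmarked hpump
end

section
/- The number v(n) of sequences in X of weight n, and hence the number c(n) of binary words of length n avoiding xx^Rx, grows faster than any polynomial: for every d, v(n)/n^d → ∞ as n → ∞. -/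
/-!
A composition `n = b₀ + ⋯ + b_k` with strictly decreasing blocks has no valley, so it lies in `X`.
It also yields a binary word of length `n` whose repeated adjacent letters ("stutters") sit exactly
at the inner block boundaries, so that the gaps between successive stutters strictly shrink. Such
a word avoids `u uᴿ u`: the two junctions of `u uᴿ u` are stutters at distance `|u|`, and the
stutters inside `u uᴿ` and `uᴿ u` are mirror-symmetric about them. Reflecting a stutter between
the junctions about the first one and applying the shrinking of gaps yields a stutter still closer
to the first junction, so there is none; but then the next stutter after the second junction, or
the end of the word, is at least `|u|` away, which shrinking gaps forbid. The subsets
`S ⊆ {1, …, m}` with `m ≈ √n` give `2 ^ m` such compositions `(n - ∑ S) + ∑ S`, and `2 ^ √n`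
outgrows every polynomial.
-/
open Filter Finset

lemma tendsto_const_pow_div_pow_atTop {r : ℝ} (hr : 1 < r) (k : ℕ) :
    Tendsto (fun s : ℕ => r ^ s / (s : ℝ) ^ k) atTop atTop := by
  have hr₀ : 0 < r := zero_lt_one.trans hr
  have h : Tendsto (fun s : ℕ => (s : ℝ) ^ k / r ^ s) atTop (nhdsWithin 0 (Set.Ioi 0)) :=
    tendsto_nhdsWithin_of_tendsto_nhds_of_eventually_within _
      (tendsto_pow_const_div_const_pow_of_one_lt k hr)
      (eventually_gt_atTop 0 |>.mono fun s hs => by simp only [Set.mem_Ioi]; positivity)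
  convert h.inv_tendsto_nhdsGT_zero using 1
  ext s
  simp [inv_div]

lemma Nat.tendsto_sqrt_atTop : Tendsto Nat.sqrt atTop atTop :=
  tendsto_atTop_atTop.mpr fun b => ⟨b ^ 2, fun _ hn => Nat.le_sqrt'.mpr hn⟩

lemma tendsto_div_pow_atTop_of_two_pow_sqrt_le {F : ℕ → ℕ}
    (hF : ∀ᶠ n in atTop, 2 ^ n.sqrt ≤ F n) (d : ℕ) :
    Tendsto (fun n : ℕ => (F n : ℝ) / (n : ℝ) ^ d) atTop atTop := by
  have hlow : Tendsto (fun n : ℕ => (2 : ℝ) ^ n.sqrt / (n.sqrt : ℝ) ^ (2 * d) / 4 ^ d)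
      atTop atTop :=
    ((tendsto_const_pow_div_pow_atTop one_lt_two (2 * d)).comp
      Nat.tendsto_sqrt_atTop).atTop_div_const (by positivity)
  refine tendsto_atTop_mono' _ ?_ hlow
  filter_upwards [hF, eventually_ge_atTop 1] with n hFn hn
  have hs : 1 ≤ n.sqrt := Nat.le_sqrt'.mpr (by simpa using hn)
  -- `n < (√n + 1)² ≤ (2√n)²`
  have hn_le : (n : ℝ) ≤ 4 * (n.sqrt : ℝ) ^ 2 := by
    have := Nat.lt_succ_sqrt' n
    exact_mod_cast (by nlinarith : n ≤ 4 * n.sqrt ^ 2)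
  rw [div_div, ← mul_comm, pow_mul, ← mul_pow]
  gcongr
  exact_mod_cast hFn

section Stutter

variable {α : Type*}

def IsStutter (w : List α) (i : ℕ) : Prop := i + 1 < w.length ∧ w[i]? = w[i + 1]?

lemma getElem?_append_append_length_add {s y t : List α} {j : ℕ} (hj : j < y.length) :
    (s ++ y ++ t)[s.length + j]? = y[j]? := by
  rw [List.append_assoc, List.getElem?_append_right (by omega), Nat.add_sub_cancel_left,
    List.getElem?_append_left hj]

lemma isStutter_append_append {s y t : List α} {j : ℕ} (hj : j + 1 < y.length) :
    IsStutter (s ++ y ++ t) (s.length + j) ↔ IsStutter y j := by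
  rw [IsStutter, IsStutter, Nat.add_assoc, getElem?_append_append_length_add (by omega),
    getElem?_append_append_length_add hj]
  simp only [List.length_append, and_congr_left_iff]
  omega

lemma IsStutter.reverse {w : List α} {i : ℕ} (h : IsStutter w i) :
    IsStutter w.reverse (w.length - 2 - i) := by
  obtain ⟨hi, heq⟩ := h
  refine ⟨by simp; omega, ?_⟩
  rw [List.getElem?_reverse (by omega), List.getElem?_reverse (by omega),
    show w.length - 1 - (w.length - 2 - i) = i + 1 by omega,
    show w.length - 1 - (w.length - 2 - i + 1) = i by omega, heq]

lemma IsStutter.mirror {s z t : List α} (hz : z.reverse = z) {j : ℕ} (hj : j + 1 < z.length)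
    (h : IsStutter (s ++ z ++ t) (s.length + j)) :
    IsStutter (s ++ z ++ t) (s.length + (z.length - 2 - j)) := by
  rw [isStutter_append_append hj] at h
  rw [isStutter_append_append (by omega)]
  simpa [hz] using h.reverse

lemma isStutter_append_reverse {x : List α} (hx : x ≠ []) :
    IsStutter (x ++ x.reverse) (x.length - 1) := by
  have := List.length_pos_iff.mpr hx
  refine ⟨by simp; omega, ?_⟩
  rw [List.getElem?_append_left (by omega), List.getElem?_append_right (by omega),
    List.getElem?_reverse (by omega)]
  congr 1
  omega

-- Once `p < q` are stutters, the next stutter, or else the end of `w`, comes less than `q - p`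
-- after `q`.
def HasShrinkingStutterGaps (w : List α) : Prop :=
  ∀ p q, IsStutter w p → IsStutter w q → p < q →
    w.length + p ≤ 2 * q ∨ ∃ r, IsStutter w r ∧ q < r ∧ r + p < 2 * q

theorem not_infix_of_hasShrinkingStutterGaps {w u : List α} (hw : HasShrinkingStutterGaps w)
    (hu : u ≠ []) : ¬ u ++ u.reverse ++ u <:+: w := by
  rintro ⟨s, t, rfl⟩
  have hm : 0 < u.length := List.length_pos_iff.mpr hu
  have hlen : (s ++ (u ++ u.reverse ++ u) ++ t).length = s.length + 3 * u.length + t.length := by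
    simp; omega
  -- Stutters are mirrored inside the palindromes `u uᴿ` and `uᴿ u`, centred at `ha` and `hb`.
  have split₁ : s ++ (u ++ u.reverse ++ u) ++ t = s ++ (u ++ u.reverse) ++ (u ++ t) := by simp
  have split₂ : s ++ (u ++ u.reverse ++ u) ++ t = (s ++ u) ++ (u.reverse ++ u) ++ t := by simp
  set w := s ++ (u ++ u.reverse ++ u) ++ t
  set o := s.length
  set m := u.length
  have mirror₁ : ∀ j, j + 1 < 2 * m → IsStutter w (o + j) → IsStutter w (o + (2 * m - 2 - j)) := by
    intro j hj h
    rw [split₁] at h ⊢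
    convert h.mirror (by simp) (by simp; omega) using 2
    simp [m]; omega
  have mirror₂ : ∀ j, j + 1 < 2 * m →
      IsStutter w (o + m + j) → IsStutter w (o + m + (2 * m - 2 - j)) := by
    intro j hj h
    rw [split₂, show o + m = (s ++ u).length by simp [o, m]] at h ⊢
    convert h.mirror (by simp) (by simp; omega) using 2
    simp [m]; omega
  have ha : IsStutter w (o + (m - 1)) := by
    rw [split₁, isStutter_append_append (by simp; omega)]
    exact isStutter_append_reverse hu
  have hb : IsStutter w (o + m + (m - 1)) := by
    rw [split₂, show o + m = (s ++ u).length by simp [o, m],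
      isStutter_append_append (by simp; omega)]
    simpa using isStutter_append_reverse (List.reverse_ne_nil_iff.mpr hu)
  have gap : ∀ q, o + (m - 1) < q → q < o + m + (m - 1) → ¬ IsStutter w q := by
    intro q
    induction q using Nat.strong_induction_on with
    | _ q ih =>
      intro hq₁ hq₂ hq
      have hp := mirror₁ (q - o) (by omega) (by rwa [Nat.add_sub_cancel' (by omega)])
      rcases hw _ _ hp ha (by omega) with h | ⟨r, hr, hr₁, hr₂⟩
      · omega
      · exact ih r (by omega) hr₁ (by omega) hr
  rcases hw _ _ ha hb (by omega) with h | ⟨r, hr, hr₁, hr₂⟩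
  · omega
  · have := mirror₂ (r - (o + m)) (by omega) (by rwa [Nat.add_sub_cancel' (by omega)])
    exact gap _ (by omega) (by omega) this

end Stutter

def stutterWord (n : ℕ) (B : Finset ℕ) : List Bool :=
  List.ofFn fun i : Fin n => Nat.bodd #{j ∈ range (i + 1) | j ∉ B}

lemma isStutter_stutterWord {n i : ℕ} {B : Finset ℕ} :
    IsStutter (stutterWord n B) i ↔ i + 1 < n ∧ i + 1 ∈ B := by
  simp only [IsStutter, stutterWord, List.length_ofFn, List.getElem?_ofFn]
  refine and_congr_right fun hi => ?_
  rw [dif_pos (by omega), dif_pos hi, Option.some_inj, range_add_one (n := i + 1), filter_insert]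
  by_cases hB : i + 1 ∈ B
  · simp [hB]
  · rw [if_pos hB, card_insert_of_notMem (by simp)]
    simp [hB]

namespace Composition

variable {n : ℕ} (c : Composition n)

def toWord : List Bool := stutterWord n (c.boundaries.map Fin.valEmbedding)

@[simp] lemma length_toWord : c.toWord.length = n := by simp [toWord, stutterWord]

lemma mem_map_boundaries {k : ℕ} :
    k ∈ c.boundaries.map Fin.valEmbedding ↔ ∃ j ≤ c.length, c.sizeUpTo j = k := by
  simp only [boundaries, Finset.map_map, Finset.mem_map, mem_univ, true_and]
  constructor
  · rintro ⟨j, rfl⟩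
    exact ⟨j, Nat.lt_succ_iff.mp j.2, rfl⟩
  · rintro ⟨j, hj, rfl⟩
    exact ⟨⟨j, Nat.lt_succ_iff.mpr hj⟩, rfl⟩

lemma sizeUpTo_lt {j : ℕ} (hj : j < c.length) : c.sizeUpTo j < n :=
  (c.sizeUpTo_strict_mono hj).trans_le (c.sizeUpTo_le _)

lemma isStutter_toWord {i : ℕ} :
    IsStutter c.toWord i ↔ ∃ j < c.length, c.sizeUpTo j = i + 1 := by
  rw [toWord, isStutter_stutterWord, mem_map_boundaries]
  constructor
  · rintro ⟨hi, j, hj, hji⟩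
    refine ⟨j, lt_of_le_of_ne hj ?_, hji⟩
    rintro rfl
    rw [sizeUpTo_length] at hji
    omega
  · rintro ⟨j, hj, hji⟩
    exact ⟨hji ▸ c.sizeUpTo_lt hj, j, hj.le, hji⟩

lemma mem_map_boundaries_iff_isStutter {k : ℕ} :
    k ∈ c.boundaries.map Fin.valEmbedding ↔ k = 0 ∨ k = n ∨ IsStutter c.toWord (k - 1) := by
  rw [toWord, isStutter_stutterWord]
  constructor
  · intro hk
    obtain ⟨j, -, rfl⟩ := c.mem_map_boundaries.mp hk
    have := c.sizeUpTo_le j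
    by_cases h0 : c.sizeUpTo j = 0
    · exact .inl h0
    by_cases hn : c.sizeUpTo j = n
    · exact .inr (.inl hn)
    exact .inr (.inr ⟨by omega, by rwa [Nat.sub_add_cancel (by omega)]⟩)
  · have h0 : 0 ∈ c.boundaries.map Fin.valEmbedding :=
      c.mem_map_boundaries.mpr ⟨0, by simp, c.sizeUpTo_zero⟩
    rintro (rfl | rfl | ⟨-, hmem⟩)
    · exact h0
    · exact c.mem_map_boundaries.mpr ⟨c.length, le_rfl, c.sizeUpTo_length⟩
    · cases k
      · exact h0
      · simpa using hmem

theorem toWord_injective : Function.Injective (toWord : Composition n → List Bool) := by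
  intro c₁ c₂ h
  apply (compositionEquiv n).injective
  ext k
  change k ∈ c₁.boundaries ↔ k ∈ c₂.boundaries
  rw [← mem_map' Fin.valEmbedding, ← mem_map' Fin.valEmbedding,
    mem_map_boundaries_iff_isStutter, mem_map_boundaries_iff_isStutter, h]

theorem hasShrinkingStutterGaps_toWord (h : c.blocks.SortedGT) :
    HasShrinkingStutterGaps c.toWord := by
  intro p q hp hq hpq
  obtain ⟨s, hs, hsp⟩ := c.isStutter_toWord.mp hp
  obtain ⟨t, ht, htq⟩ := c.isStutter_toWord.mp hq
  have hst : s < t := by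
    by_contra! hts
    have := c.monotone_sizeUpTo hts
    omega
  -- `sizeUpTo (t + 1) - sizeUpTo t = blocks[t] < blocks[s] ≤ sizeUpTo t - sizeUpTo s`
  have key : c.sizeUpTo (t + 1) + c.sizeUpTo s < 2 * c.sizeUpTo t := by
    have hblock : c.blocks[t] < c.blocks[s] :=
      h.pairwise.rel_get_of_lt (a := ⟨s, by simpa using hs⟩) (b := ⟨t, by simpa using ht⟩) hst
    have := c.monotone_sizeUpTo (show s + 1 ≤ t by omega)
    rw [c.sizeUpTo_succ ht] at *
    rw [c.sizeUpTo_succ hs] at this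
    omega
  rcases Nat.lt_or_ge (t + 1) c.length with ht' | ht'
  · refine .inr ⟨c.sizeUpTo (t + 1) - 1, c.isStutter_toWord.mpr ⟨t + 1, ht', ?_⟩, ?_, ?_⟩ <;>
      have := c.sizeUpTo_strict_mono ht <;> omega
  · have : c.sizeUpTo (t + 1) = n := c.sizeUpTo_ofLength_le _ ht'
    left
    simp only [length_toWord]
    omega

end Composition

lemma inX_of_sortedGT {d : List ℕ} (hpos : ∀ x ∈ d, 0 < x) (h : d.SortedGT) : InX d := by
  refine ⟨hpos, fun j _ hj ⟨_, hle⟩ => ?_⟩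
  have : d[j + 1] < d[j] := h.pairwise.rel_get_of_lt (a := ⟨j, by omega⟩) (b := ⟨j + 1, hj⟩)
    (by simp)
  rw [List.getD_eq_getElem _ _ (by omega), List.getD_eq_getElem _ _ hj] at hle
  omega

lemma card_sortedGT_compositions_le_v (n : ℕ) :
    Nat.card {γ : Composition n // γ.blocks.SortedGT} ≤ v n := by
  have : Finite {d : List ℕ // InX d ∧ d.sum = n} :=
    Finite.of_injective (fun d => (⟨d.1, d.2.1.1 _, d.2.2⟩ : Composition n))
      fun d₁ d₂ h => Subtype.ext (congrArg Composition.blocks h)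
  refine Nat.card_le_card_of_injective
    (fun γ => ⟨γ.1.blocks, inX_of_sortedGT (fun _ => γ.1.blocks_pos) γ.2, γ.1.blocks_sum⟩) ?_
  intro γ₁ γ₂ h
  exact Subtype.ext (Composition.ext (congrArg Subtype.val h))

lemma card_sortedGT_compositions_le_c (n : ℕ) :
    Nat.card {γ : Composition n // γ.blocks.SortedGT} ≤ c n := by
  have : Finite {w : List Bool // w.length = n ∧ AvoidsP w} :=
    ((List.finite_length_eq Bool n).subset fun _ hw => hw.1).to_subtype
  refine Nat.card_le_card_of_injective (fun γ => ⟨γ.1.toWord, γ.1.length_toWord,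
    fun ⟨_, hu, hinf⟩ => not_infix_of_hasShrinkingStutterGaps
      (γ.1.hasShrinkingStutterGaps_toWord γ.2) hu hinf⟩) ?_
  intro γ₁ γ₂ h
  exact Subtype.ext (Composition.toWord_injective (congrArg Subtype.val h))

lemma Finset.sum_sort {α : Type*} [AddCommMonoid α] (r : α → α → Prop) [DecidableRel r]
    [IsTrans α r] [Std.Antisymm r] [Std.Total r] (S : Finset α) :
    (S.sort r).sum = ∑ x ∈ S, x := by
  rw [Finset.sum_eq_multiset_sum, Multiset.map_id', ← Finset.sort_eq S r, Multiset.sum_coe]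

lemma two_pow_le_card_sortedGT_compositions {m n : ℕ} (h : m * (m + 3) < 2 * n) :
    2 ^ m ≤ Nat.card {γ : Composition n // γ.blocks.SortedGT} := by
  have hsum : ∀ S ⊆ Icc 1 m, ∑ x ∈ S, x + m < n := by
    intro S hS
    have h₁ : ∑ x ∈ S, x ≤ ∑ x ∈ range (m + 1), x :=
      sum_le_sum_of_subset (hS.trans fun x hx => by simp at hx ⊢; omega)
    have h₂ := sum_range_id_mul_two (m + 1)
    simp only [Nat.add_sub_cancel] at h₂
    nlinarith
  let toComposition (S : (Icc 1 m).powerset) : {γ : Composition n // γ.blocks.SortedGT} :=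
    have hS : S.1 ⊆ Icc 1 m := mem_powerset.mp S.2
    ⟨⟨(n - ∑ x ∈ S.1, x) :: S.1.sort (· ≥ ·), by
        intro x hx
        rcases List.mem_cons.mp hx with rfl | hx
        · have := hsum _ hS; omega
        · have := mem_Icc.mp (hS ((mem_sort _).mp hx)); omega,
      by have := hsum _ hS; simp only [List.sum_cons, Finset.sum_sort]; omega⟩, by
      refine List.Pairwise.sortedGT (List.pairwise_cons.mpr ⟨fun x hx => ?_, ?_⟩)
      · have := mem_Icc.mp (hS ((mem_sort _).mp hx)); have := hsum _ hS; omega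
      · exact (sortedGT_sort S.1).pairwise⟩
  have hinj : Function.Injective toComposition := by
    intro S₁ S₂ hS
    have := congrArg (fun γ => γ.1.blocks.tail.toFinset) hS
    simp only [toComposition, List.tail_cons, sort_toFinset] at this
    exact Subtype.ext this
  calc 2 ^ m = Nat.card (Icc 1 m).powerset := by
        rw [Nat.card_eq_finsetCard, card_powerset, Nat.card_Icc, Nat.add_sub_cancel]
    _ ≤ _ := Nat.card_le_card_of_injective _ hinj

/-- `v(n)` (and hence `c(n)`) grows faster than any polynomial. -/
theorem stmt10 :
    (∀ d : ℕ, Filter.Tendsto (fun n : ℕ => (v n : ℝ) / (n : ℝ) ^ d)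
      Filter.atTop Filter.atTop) ∧
    (∀ d : ℕ, Filter.Tendsto (fun n : ℕ => (c n : ℝ) / (n : ℝ) ^ d)
      Filter.atTop Filter.atTop) := by
  have hstrict :
      ∀ᶠ n in atTop, 2 ^ n.sqrt ≤ Nat.card {γ : Composition n // γ.blocks.SortedGT} := by
    filter_upwards [eventually_ge_atTop 16] with n hn
    have h4 : 4 ≤ n.sqrt := Nat.le_sqrt'.mpr hn
    have := Nat.sqrt_le' n
    exact two_pow_le_card_sortedGT_compositions (by nlinarith)
  exact ⟨tendsto_div_pow_atTop_of_two_pow_sqrt_le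
      (hstrict.mono fun n h => h.trans (card_sortedGT_compositions_le_v n)),
    tendsto_div_pow_atTop_of_two_pow_sqrt_le
      (hstrict.mono fun n h => h.trans (card_sortedGT_compositions_le_c n))⟩
end

section
/- The number c(n) of binary words of length n avoiding the pattern xx^Rx grows subexponentially: for every real α > 1, c(n)/α^n → 0 as n → ∞. Consequently, the growth of c(n) is intermediate between polynomial and exponential. -/
/-- equality derivative -/
def dlt : List Bool → List Bool
  | [] => []
  | [_] => []
  | a :: b :: t => (a == b) :: dlt (b :: t)

@[simp] lemma dlt_nil : dlt [] = [] := rfl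
@[simp] lemma dlt_single (a : Bool) : dlt [a] = [] := rfl
@[simp] lemma dlt_cons_cons (a b : Bool) (t : List Bool) :
    dlt (a :: b :: t) = (a == b) :: dlt (b :: t) := rfl

lemma dlt_length : ∀ w : List Bool, (dlt w).length = w.length - 1
  | [] => rfl
  | [_] => rfl
  | a :: b :: t => by simp [dlt_length (b :: t)]

lemma recon : ∀ w1 w2 : List Bool, w1.length = w2.length →
    w1.headD false = w2.headD false → dlt w1 = dlt w2 → w1 = w2
  | [], [], _, _, _ => rfl
  | [], _ :: _, h, _, _ => by simp at h
  | _ :: _, [], h, _, _ => by simp at h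
  | [a], [a'], _, hh, _ => by simpa using hh
  | [a], _ :: _ :: _, h, _, _ => by simp at h
  | _ :: _ :: _, [a'], h, _, _ => by simp at h
  | a :: b :: t, a' :: b' :: t', h, hh, hd => by
    simp only [List.headD_cons] at hh
    subst hh
    simp only [dlt_cons_cons, List.cons.injEq] at hd
    have hb : b = b' := by
      cases a <;> cases b <;> cases b' <;> simp_all
    subst hb
    have := recon (b :: t) (b :: t') (by simpa using h) rfl hd.2
    simp_all

lemma dlt_tail : ∀ w : List Bool, dlt w.tail = (dlt w).tail
  | [] => rfl
  | [_] => rfl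
  | [_, _] => rfl
  | _ :: b :: c :: t => by simp

lemma dlt_drop : ∀ (i : ℕ) (w : List Bool), dlt (w.drop i) = (dlt w).drop i
  | 0, w => by simp
  | i + 1, w => by
    have : List.drop (i+1) w = List.drop i w.tail := by
      cases w <;> simp
    rw [this, dlt_drop i w.tail, dlt_tail, List.drop_tail]

lemma dlt_take : ∀ (m : ℕ) (w : List Bool), dlt (w.take (m + 1)) = (dlt w).take m
  | 0, w => by cases w <;> simp
  | m + 1, [] => by simp
  | m + 1, [a] => by simp
  | m + 1, a :: b :: t => by
    have h := dlt_take m (b :: t)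
    simp only [List.take_succ_cons] at h ⊢
    simp [h]

/-- lift an infix of the derivative to an infix of the word -/
lemma dlt_infix_lift {w y : List Bool} (hy : y ≠ []) (h : y <:+: dlt w) :
    ∃ a : List Bool, a <:+: w ∧ dlt a = y ∧ a.length = y.length + 1 := by
  obtain ⟨p, q, hpq⟩ := h
  refine ⟨(w.drop p.length).take (y.length + 1), ?_, ?_, ?_⟩
  · exact (List.take_prefix _ _).isInfix.trans (List.drop_suffix _ _).isInfix
  · rw [dlt_take, dlt_drop, ← hpq]
    simp
  · rw [List.length_take, List.length_drop]
    have h1 : (dlt w).length = p.length + (y.length + q.length) := by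
      rw [← hpq]; simp
    have h2 := dlt_length w
    have h3 : w.length ≠ 0 := by
      intro h0
      rw [List.eq_nil_of_length_eq_zero h0] at h1 h2
      simp at h1 h2
      exact hy (List.eq_nil_of_length_eq_zero (by omega))
    omega

/-- reconstruct a word from its head and derivative -/
def build (b : Bool) : List Bool → List Bool
  | [] => [b]
  | e :: s => b :: build (if e then b else !b) s

@[simp] lemma build_length (b : Bool) : ∀ s, (build b s).length = s.length + 1
  | [] => rfl
  | e :: s => by simp [build, build_length _ s]

@[simp] lemma build_ne_nil (b : Bool) (s : List Bool) : build b s ≠ [] := by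
  cases s <;> simp [build]

@[simp] lemma build_headD (b : Bool) (s : List Bool) : (build b s).headD false = b := by
  cases s <;> simp [build]

lemma build_eq_cons (b : Bool) (s : List Bool) : ∃ t, build b s = b :: t := by
  cases s <;> exact ⟨_, rfl⟩

@[simp] lemma dlt_build (b : Bool) : ∀ s, dlt (build b s) = s
  | [] => rfl
  | e :: s => by
    obtain ⟨t, ht⟩ := build_eq_cons (if e then b else !b) s
    have h := dlt_build (if e then b else !b) s
    rw [ht] at h
    simp only [build, ht, dlt_cons_cons, h]
    cases e <;> cases b <;> simp

lemma dlt_append : ∀ x y : List Bool, x ≠ [] → y ≠ [] →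
    dlt (x ++ y) = dlt x ++ (x.getLastD false == y.headD false) :: dlt y
  | [], _, hx, _ => absurd rfl hx
  | [a], y, _, hy => by
    cases y with
    | nil => exact absurd rfl hy
    | cons c t => simp
  | a :: b :: t, y, _, hy => by
    have h := dlt_append (b :: t) y (by simp) hy
    simp only [List.cons_append] at h ⊢
    rw [dlt_cons_cons, h]
    simp

lemma dlt_reverse : ∀ x : List Bool, dlt x.reverse = (dlt x).reverse
  | [] => rfl
  | [_] => rfl
  | a :: b :: t => by
    have h := dlt_reverse (b :: t)
    have hne : (b :: t).reverse ≠ [] := by simp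
    have hL : (b :: t).reverse.getLastD false = b := by
      rw [List.getLastD_eq_getLast?, List.getLast?_reverse]
      rfl
    calc dlt ((a :: b :: t).reverse) = dlt ((b :: t).reverse ++ [a]) := by simp
      _ = dlt ((b :: t).reverse) ++ ((b :: t).reverse.getLastD false == a) :: dlt [a] :=
          dlt_append _ _ hne (by simp)
      _ = (dlt (b :: t)).reverse ++ [b == a] := by rw [h, hL]; rfl
      _ = (dlt (a :: b :: t)).reverse := by
          rw [dlt_cons_cons, List.reverse_cons]
          congr 2
          cases a <;> cases b <;> rfl

lemma build_getLastD (b : Bool) (s : List Bool) :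
    (build b s).reverse.headD false = (build b s).getLastD false := by
  rw [List.getLastD_eq_getLast?, ← List.head?_reverse]
  cases hr : (build b s).reverse with
  | nil => simp at hr
  | cons c t => rfl

/-- the key pattern: `0^f 1 0^f 1 0^f` in the derivative means `u uᴿ u` in the word -/
def pat (f : ℕ) : List Bool :=
  List.replicate f false ++ true :: (List.replicate f false ++ true :: List.replicate f false)

lemma avoids_pat {w : List Bool} (hw : AvoidsP w) (f : ℕ) : ¬ (pat f <:+: dlt w) := by
  intro hinf
  obtain ⟨a, hainf, hda, hal⟩ := dlt_infix_lift (by simp [pat]) hinf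
  set b := a.headD false with hb
  set u := build b (List.replicate f false) with hu
  have hune : u ≠ [] := build_ne_nil _ _
  have hlast : u.reverse.headD false = u.getLastD false := build_getLastD _ _
  have hrevne : u.reverse ≠ [] := by simpa using hune
  have hgr : u.reverse.getLastD false = u.headD false := by
    rw [List.getLastD_eq_getLast?, List.getLast?_reverse]
    cases hu2 : u with
    | nil => exact absurd hu2 hune
    | cons c t => rfl
  have hdrhs : dlt (u ++ (u.reverse ++ u)) = pat f := by
    rw [dlt_append u _ hune (by simp [hrevne]),
        dlt_append u.reverse u hrevne hune]
    have h1 : (u.reverse ++ u).headD false = u.reverse.headD false := by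
      cases hr : u.reverse with
      | nil => exact absurd hr hrevne
      | cons c t => simp
    rw [h1, hlast, hgr, dlt_reverse]
    simp [hu, pat, List.reverse_replicate]
  have haeq : a = u ++ (u.reverse ++ u) := by
    apply recon
    · rw [hal]
      simp [pat, hu]
      omega
    · rw [← hb]
      have h1 : (u ++ (u.reverse ++ u)).headD false = u.headD false := by
        cases hu2 : u with
        | nil => exact absurd hu2 hune
        | cons c t => simp [hu2]
      rw [h1, hu, build_headD]
    · rw [hda, hdrhs]
  exact hw ⟨u, hune, by rw [List.append_assoc, ← haeq]; exact hainf⟩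

/-- lengths of runs of `false` between the `true`s -/
def fseq : List Bool → List ℕ
  | [] => [0]
  | true :: l => 0 :: fseq l
  | false :: l =>
    match fseq l with
    | [] => [1]
    | x :: xs => (x + 1) :: xs

lemma fseq_ne_nil : ∀ l : List Bool, fseq l ≠ []
  | [] => by simp [fseq]
  | true :: l => by simp [fseq]
  | false :: l => by
    cases h : fseq l with
    | nil => simp [fseq, h]
    | cons x xs => simp [fseq, h]

/-- inverse of fseq -/
def gseq : List ℕ → List Bool
  | [] => []
  | [a] => List.replicate a false
  | a :: l => List.replicate a false ++ true :: gseq l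

lemma gseq_fseq : ∀ l : List Bool, gseq (fseq l) = l
  | [] => rfl
  | true :: l => by
    cases h : fseq l with
    | nil => exact absurd h (fseq_ne_nil l)
    | cons x xs =>
      have ih := gseq_fseq l
      rw [h] at ih
      show gseq (0 :: fseq l) = _
      rw [h]
      show List.replicate 0 false ++ true :: gseq (x :: xs) = _
      simp [ih]
  | false :: l => by
    cases h : fseq l with
    | nil => exact absurd h (fseq_ne_nil l)
    | cons x xs =>
      have ih := gseq_fseq l
      rw [h] at ih
      show gseq (match fseq l with | [] => [1] | x :: xs => (x+1) :: xs) = _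
      rw [h]
      cases xs with
      | nil =>
        show List.replicate (x+1) false = _
        rw [← ih]
        show List.replicate (x+1) false = false :: List.replicate x false
        simp [List.replicate_succ]
      | cons y ys =>
        show List.replicate (x+1) false ++ true :: gseq (y :: ys) = _
        rw [← ih]
        show _ = false :: (List.replicate x false ++ true :: gseq (y :: ys))
        simp [List.replicate_succ]

lemma fseq_cons : ∀ (x : List Bool) {a : ℕ} {l : List ℕ}, fseq x = a :: l →
    (l = [] ∧ x = List.replicate a false) ∨
    (∃ x', x = List.replicate a false ++ true :: x' ∧ fseq x' = l)
  | [], a, l, h => by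
    simp [fseq] at h
    exact Or.inl ⟨h.2, by simp [← h.1]⟩
  | true :: y, a, l, h => by
    simp only [fseq, List.cons.injEq] at h
    exact Or.inr ⟨y, by simp [← h.1, h.2], by rw [h.2]⟩
  | false :: y, a, l, h => by
    cases hy : fseq y with
    | nil => exact absurd hy (fseq_ne_nil y)
    | cons b m =>
      have h' : fseq (false :: y) = (b + 1) :: m := by
        show (match fseq y with | [] => [1] | x :: xs => (x+1) :: xs) = _
        rw [hy]
      rw [h'] at h
      obtain ⟨ha, hl⟩ := List.cons.injEq .. |>.mp h
      rcases fseq_cons y hy with ⟨hm, hrep⟩ | ⟨x', hx', hfx'⟩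
      · refine Or.inl ⟨by rw [← hl, hm], ?_⟩
        rw [← ha, hrep, List.replicate_succ]
      · refine Or.inr ⟨x', ?_, by rw [hfx', hl]⟩
        rw [hx', ← ha, List.replicate_succ]
        simp

lemma fseq_sum_length : ∀ x : List Bool, (fseq x).sum + (fseq x).length = x.length + 1
  | [] => rfl
  | true :: y => by
    have := fseq_sum_length y
    simp only [fseq, List.sum_cons, List.length_cons, List.length]
    omega
  | false :: y => by
    have ih := fseq_sum_length y
    cases hy : fseq y with
    | nil => exact absurd hy (fseq_ne_nil y)
    | cons b m =>
      have h' : fseq (false :: y) = (b + 1) :: m := by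
        show (match fseq y with | [] => [1] | x :: xs => (x+1) :: xs) = _
        rw [hy]
      rw [h']
      rw [hy] at ih
      simp only [List.sum_cons, List.length_cons, List.length] at ih ⊢
      omega

lemma valley_pat : ∀ (j : ℕ) (x : List Bool), 1 ≤ j → j + 1 < (fseq x).length →
    (fseq x).getD j 0 ≤ (fseq x).getD (j-1) 0 → (fseq x).getD j 0 ≤ (fseq x).getD (j+1) 0 →
    pat ((fseq x).getD j 0) <:+: x := by
  intro j
  induction j with
  | zero => intro x h1; omega
  | succ j ih =>
    intro x h1 h2 hl hr
    rcases Nat.eq_zero_or_pos j with hj | hj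
    · -- base case j+1 = 1
      subst hj
      obtain ⟨f0, f1, f2, rest, hfx⟩ :
          ∃ f0 f1 f2 rest, fseq x = f0 :: f1 :: f2 :: rest := by
        cases h0 : fseq x with
        | nil => rw [h0] at h2; simp at h2
        | cons f0 l0 =>
          cases l0 with
          | nil => rw [h0] at h2; simp at h2
          | cons f1 l1 =>
            cases l1 with
            | nil => rw [h0] at h2; simp at h2
            | cons f2 rest => exact ⟨f0, f1, f2, rest, rfl⟩
      rw [hfx] at hl hr ⊢
      simp only [Nat.add_sub_cancel, List.getD_cons_succ, List.getD_cons_zero] at hl hr ⊢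
      rcases fseq_cons x hfx with ⟨h, _⟩ | ⟨x1, hx1, hf1⟩
      · simp at h
      rcases fseq_cons x1 hf1 with ⟨h, _⟩ | ⟨x2, hx2, hf2⟩
      · simp at h
      have hx2' : ∃ r, x2 = List.replicate f2 false ++ r := by
        rcases fseq_cons x2 hf2 with ⟨_, hrep⟩ | ⟨x3, hx3, _⟩
        · exact ⟨[], by simp [hrep]⟩
        · exact ⟨true :: x3, hx3⟩
      obtain ⟨r, hr2⟩ := hx2'
      obtain ⟨a, ha⟩ : ∃ a, f0 = a + f1 := ⟨f0 - f1, by omega⟩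
      obtain ⟨b, hb⟩ : ∃ b, f2 = f1 + b := ⟨f2 - f1, by omega⟩
      refine ⟨List.replicate a false, List.replicate b false ++ r, ?_⟩
      have key : ∀ (p q : ℕ) (y : List Bool),
          List.replicate (p + q) false ++ y =
            List.replicate p false ++ (List.replicate q false ++ y) := by
        intro p q y
        rw [List.replicate_add, List.append_assoc]
      rw [hx1, hx2, hr2, ha, hb, pat]
      rw [key a f1, key f1 b]
      simp [List.append_assoc]
    · -- peel
      cases h0 : fseq x with
      | nil => exact absurd h0 (fseq_ne_nil x)
      | cons a l =>
        rcases fseq_cons x h0 with ⟨h, _⟩ | ⟨x', hx', hf'⟩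
        · rw [h0, h] at h2; simp at h2
        have h2' : j + 1 < (fseq x').length := by
          rw [hf']; rw [h0] at h2; simpa using h2
        have hgl : ∀ i : ℕ, (fseq x).getD (i+1) 0 = (fseq x').getD i 0 := by
          intro i; rw [h0, hf']; simp
        have e1 : j = (j-1) + 1 := by omega
        have hl0 : (fseq x).getD (j+1) 0 ≤ (fseq x).getD j 0 := by simpa using hl
        have hl' : (fseq x').getD j 0 ≤ (fseq x').getD (j-1) 0 := by
          calc (fseq x').getD j 0 = (fseq x).getD (j+1) 0 := (hgl j).symm
            _ ≤ (fseq x).getD j 0 := hl0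
            _ = (fseq x).getD ((j-1)+1) 0 := by rw [← e1]
            _ = (fseq x').getD (j-1) 0 := hgl (j-1)
        have hr' : (fseq x').getD j 0 ≤ (fseq x').getD (j+1) 0 := by
          calc (fseq x').getD j 0 = (fseq x).getD (j+1) 0 := (hgl j).symm
            _ ≤ (fseq x).getD (j+1+1) 0 := hr
            _ = (fseq x').getD (j+1) 0 := hgl (j+1)
        have hpat := ih x' hj h2' hl' hr'
        rw [show (a :: l).getD (j+1) 0 = (fseq x').getD j 0 by rw [← hf']; simp]
        have hsuf : x' <:+ x := ⟨List.replicate a false ++ [true], by rw [hx']; simp⟩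
        exact hpat.trans hsuf.isInfix

lemma sum_getD : ∀ d : List ℕ, d.sum = ∑ i ∈ Finset.range d.length, d.getD i 0
  | [] => rfl
  | a :: l => by
    rw [List.sum_cons, sum_getD l, List.length_cons, Finset.sum_range_succ']
    simp
    omega

lemma tri_lb (d : List ℕ) (r : ℕ) (hr : r ≤ d.length)
    (hpos : ∀ i, i < r → 1 ≤ d.getD i 0)
    (hinc : ∀ i, i + 1 < r → d.getD i 0 < d.getD (i+1) 0) : r * r ≤ 2 * d.sum := by
  have claim : ∀ i, i < r → i + 1 ≤ d.getD i 0 := by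
    intro i
    induction i with
    | zero => intro h; exact hpos 0 h
    | succ i ihi =>
      intro h
      have := ihi (by omega)
      have := hinc i (by omega)
      omega
  have h1 : ∑ i ∈ Finset.range r, (i + 1) ≤ ∑ i ∈ Finset.range r, d.getD i 0 :=
    Finset.sum_le_sum fun i hi => claim i (Finset.mem_range.mp hi)
  have h2 : ∑ i ∈ Finset.range r, d.getD i 0 ≤ d.sum := by
    rw [sum_getD d]
    exact Finset.sum_le_sum_of_subset (Finset.range_subset_range.mpr hr)
  have h3 : ∑ i ∈ Finset.range r, (i + 1) = ∑ i ∈ Finset.range (r+1), i := by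
    rw [Finset.sum_range_succ']
    simp
  rw [h3, Finset.sum_range_id, Nat.add_sub_cancel] at h1
  have hdvd : 2 ∣ (r+1) * r := by
    rcases Nat.even_or_odd r with he | ho
    · exact Dvd.dvd.mul_left he.two_dvd _
    · exact Dvd.dvd.mul_right ho.add_one.two_dvd _
  have h7 : (r+1) * r ≤ 2 * d.sum := by omega
  have h8 : r * r ≤ (r+1) * r := Nat.mul_le_mul_right _ (Nat.le_succ r)
  omega

lemma tri_lb_dec (d : List ℕ) (a : ℕ) (ha : a ≤ d.length)
    (hpos : ∀ i, a ≤ i → i < d.length → 1 ≤ d.getD i 0)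
    (hdec : ∀ i, a ≤ i → i + 1 < d.length → d.getD (i+1) 0 < d.getD i 0) :
    (d.length - a) * (d.length - a) ≤ 2 * d.sum := by
  set L := d.length with hL
  set r := L - a with hrdef
  have claim : ∀ k, k < r → k + 1 ≤ d.getD (L - 1 - k) 0 := by
    intro k
    induction k with
    | zero =>
      intro h
      exact hpos (L - 1) (by omega) (by omega)
    | succ k ihk =>
      intro h
      have h1 := ihk (by omega)
      have h2 := hdec (L - 1 - (k+1)) (by omega) (by omega)
      have he : L - 1 - (k+1) + 1 = L - 1 - k := by omega
      rw [he] at h2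
      omega
  have h1 : ∑ k ∈ Finset.range r, (k + 1) ≤ ∑ k ∈ Finset.range r, d.getD (L - 1 - k) 0 :=
    Finset.sum_le_sum fun k hk => claim k (Finset.mem_range.mp hk)
  have h4 : ∑ k ∈ Finset.range r, d.getD (L - 1 - k) 0
      = ∑ k ∈ Finset.range r, d.getD (a + k) 0 := by
    have := Finset.sum_range_reflect (fun k => d.getD (a + k) 0) r
    rw [← this]
    apply Finset.sum_congr rfl
    intro k hk
    have hk' := Finset.mem_range.mp hk
    congr 1
    omega
  have h5 : ∑ k ∈ Finset.range r, d.getD (a + k) 0 = ∑ i ∈ Finset.Ico a L, d.getD i 0 := by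
    rw [Finset.sum_Ico_eq_sum_range]
  have h6 : ∑ i ∈ Finset.Ico a L, d.getD i 0 ≤ d.sum := by
    rw [sum_getD d]
    apply Finset.sum_le_sum_of_subset
    intro i hi
    simp only [Finset.mem_Ico, Finset.mem_range] at hi ⊢
    omega
  have h3 : ∑ k ∈ Finset.range r, (k + 1) = ∑ i ∈ Finset.range (r+1), i := by
    rw [Finset.sum_range_succ']
    simp
  rw [h3, Finset.sum_range_id, Nat.add_sub_cancel] at h1
  have hdvd : 2 ∣ (r+1) * r := by
    rcases Nat.even_or_odd r with he | ho
    · exact Dvd.dvd.mul_left he.two_dvd _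
    · exact Dvd.dvd.mul_right ho.add_one.two_dvd _
  have h7 : (r+1) * r ≤ 2 * d.sum := by omega
  have h8 : r * r ≤ (r+1) * r := Nat.mul_le_mul_right _ (Nat.le_succ r)
  omega

lemma novalley_length (d : List ℕ)
    (hpos : ∀ i, i < d.length → 1 ≤ d.getD i 0)
    (hnv : ∀ j, 1 ≤ j → j + 1 < d.length →
      ¬(d.getD j 0 ≤ d.getD (j-1) 0 ∧ d.getD j 0 ≤ d.getD (j+1) 0)) :
    d.length ≤ 2 * Nat.sqrt (2 * d.sum) + 1 := by
  set L := d.length with hL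
  by_cases hall : ∀ i, i + 1 < L → d.getD i 0 < d.getD (i+1) 0
  · have := tri_lb d L le_rfl hpos hall
    have hs : L ≤ Nat.sqrt (2 * d.sum) := Nat.le_sqrt.mpr this
    omega
  · push_neg at hall
    have hex : ∃ i, i + 1 < L ∧ d.getD (i+1) 0 ≤ d.getD i 0 := by
      obtain ⟨i, hi1, hi2⟩ := hall
      exact ⟨i, hi1, by omega⟩
    classical
    let t := Nat.find hex
    obtain ⟨ht1, ht2⟩ : t + 1 < L ∧ d.getD (t+1) 0 ≤ d.getD t 0 := Nat.find_spec hex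
    have hmin : ∀ i, i < t → i + 1 < L → d.getD i 0 < d.getD (i+1) 0 := by
      intro i hi hi1
      have h := Nat.find_min hex hi
      push_neg at h
      exact h hi1
    -- increasing part
    have hinc : (t+1) * (t+1) ≤ 2 * d.sum := by
      apply tri_lb d (t+1) (by omega) (fun i hi => hpos i (by omega))
      intro i hi
      exact hmin i (by omega) (by omega)
    -- weak decrease from t
    have hweak : ∀ i, t ≤ i → i + 1 < L → d.getD (i+1) 0 ≤ d.getD i 0 := by
      intro i hti
      induction i, hti using Nat.le_induction with
      | base => exact fun _ => ht2
      | succ i hti ihi =>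
        intro h
        have hw := ihi (by omega)
        have := hnv (i+1) (by omega) (by omega)
        push_neg at this
        have := this (by simpa using hw)
        omega
    have hdec : ∀ i, t + 1 ≤ i → i + 1 < L → d.getD (i+1) 0 < d.getD i 0 := by
      intro i hti h
      have hw : d.getD i 0 ≤ d.getD (i-1) 0 := by
        have := hweak (i-1) (by omega) (by omega)
        have e : i - 1 + 1 = i := by omega
        rwa [e] at this
      have := hnv i (by omega) (by omega)
      push_neg at this
      have := this hw
      omega
    have hdec2 := tri_lb_dec d (t+1) (by omega)
      (fun i _ hi => hpos i hi) hdec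
    have hs1 : t + 1 ≤ Nat.sqrt (2 * d.sum) := Nat.le_sqrt.mpr hinc
    have hs2 : L - (t+1) ≤ Nat.sqrt (2 * d.sum) := Nat.le_sqrt.mpr hdec2
    omega

def dOf (w : List Bool) : List ℕ := (fseq (dlt w)).map (· + 1)

lemma sum_map_succ : ∀ f : List ℕ, (f.map (· + 1)).sum = f.sum + f.length
  | [] => rfl
  | a :: l => by simp [sum_map_succ l]; omega

lemma getD_map_lt (f : List ℕ) {i : ℕ} (h : i < f.length) :
    (f.map (· + 1)).getD i 0 = f.getD i 0 + 1 := by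
  rw [List.getD_eq_getElem _ _ (by simpa using h), List.getD_eq_getElem _ _ h]
  simp

lemma dOf_sum {w : List Bool} (hw : w ≠ []) : (dOf w).sum = w.length := by
  rw [dOf, sum_map_succ, fseq_sum_length, dlt_length]
  have : w.length ≠ 0 := fun h => hw (List.eq_nil_of_length_eq_zero h)
  omega

lemma dOf_pos (w : List Bool) : ∀ x ∈ dOf w, 0 < x := by
  intro x hx
  simp only [dOf, List.mem_map] at hx
  obtain ⟨y, _, hy⟩ := hx
  omega

lemma dOf_novalley {w : List Bool} (hw : AvoidsP w) :
    ∀ j, 1 ≤ j → j + 1 < (dOf w).length →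
      ¬((dOf w).getD j 0 ≤ (dOf w).getD (j-1) 0 ∧ (dOf w).getD j 0 ≤ (dOf w).getD (j+1) 0) := by
  intro j hj hlen ⟨hl, hr⟩
  have hlf : j + 1 < (fseq (dlt w)).length := by simpa [dOf] using hlen
  simp only [dOf] at hl hr
  rw [getD_map_lt _ (by omega), getD_map_lt _ (by omega)] at hl
  rw [getD_map_lt _ (by omega), getD_map_lt _ (by omega)] at hr
  exact avoids_pat hw _ (valley_pat j (dlt w) hj hlf (by omega) (by omega))

lemma getD_pos_of_lt {d : List ℕ} (hp : ∀ x ∈ d, 0 < x) {i : ℕ} (hi : i < d.length) :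
    0 < d.getD i 0 := by
  rw [List.getD_eq_getElem _ _ hi]
  exact hp _ (List.getElem_mem hi)

lemma dOf_length {w : List Bool} (hw : AvoidsP w) (hne : w ≠ []) :
    (dOf w).length ≤ 2 * Nat.sqrt (2 * w.length) + 1 := by
  have h := novalley_length (dOf w)
    (fun i hi => getD_pos_of_lt (dOf_pos w) hi)
    (dOf_novalley hw)
  rwa [dOf_sum hne] at h

lemma getD_ext {K : ℕ} {d1 d2 : List ℕ} (h1 : d1.length ≤ K) (h2 : d2.length ≤ K)
    (hp1 : ∀ x ∈ d1, 0 < x) (hp2 : ∀ x ∈ d2, 0 < x)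
    (h : ∀ i, i < K → d1.getD i 0 = d2.getD i 0) : d1 = d2 := by
  have hlen : d1.length = d2.length := by
    by_contra hne
    rcases Nat.lt_or_ge d1.length d2.length with hlt | hge
    · have h0 : d1.getD d1.length 0 = 0 := List.getD_eq_default _ _ le_rfl
      have hpos := getD_pos_of_lt hp2 hlt
      rw [← h d1.length (by omega)] at hpos
      omega
    · have hlt : d2.length < d1.length := by omega
      have h0 : d2.getD d2.length 0 = 0 := List.getD_eq_default _ _ le_rfl
      have hpos := getD_pos_of_lt hp1 hlt
      rw [h d2.length (by omega)] at hpos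
      omega
  apply List.ext_getElem hlen
  intro i hi1 hi2
  have := h i (by omega)
  rwa [List.getD_eq_getElem _ _ hi1, List.getD_eq_getElem _ _ hi2] at this

lemma dOf_inj {w1 w2 : List Bool} (hlen : w1.length = w2.length)
    (hh : w1.headD false = w2.headD false) (hd : dOf w1 = dOf w2) : w1 = w2 := by
  have hf : fseq (dlt w1) = fseq (dlt w2) := by
    have hinj : Function.Injective (· + 1 : ℕ → ℕ) := fun a b h => by simpa using h
    exact List.map_injective_iff.mpr hinj hd
  have hdlt : dlt w1 = dlt w2 := by
    rw [← gseq_fseq (dlt w1), ← gseq_fseq (dlt w2), hf]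
  exact recon w1 w2 hlen hh hdlt

lemma c_le (n : ℕ) (hn : 1 ≤ n) :
    c n ≤ 2 * (n + 1) ^ (2 * Nat.sqrt (2 * n) + 1) := by
  classical
  set K := 2 * Nat.sqrt (2 * n) + 1 with hK
  have hcard : Nat.card (Bool × (Fin K → Fin (n+1))) = 2 * (n+1) ^ K := by
    simp [Nat.card_eq_fintype_card]
  rw [c, ← hcard]
  apply Nat.card_le_card_of_injective
    (f := fun w : {w : List Bool // w.length = n ∧ AvoidsP w} =>
      ((w.1.headD false, fun i : Fin K => (⟨(dOf w.1).getD i 0, by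
        rcases Nat.lt_or_ge (i : ℕ) ((dOf w.1).length) with hi | hi
        · have hne : w.1 ≠ [] := by
            intro h0
            have := w.2.1
            rw [h0] at this
            simp at this
            omega
          have hmem : (dOf w.1).getD (i : ℕ) 0 ∈ dOf w.1 := by
            rw [List.getD_eq_getElem _ _ hi]
            exact List.getElem_mem hi
          have := List.single_le_sum (l := dOf w.1) (fun x _ => Nat.zero_le x) _ hmem
          rw [dOf_sum hne, w.2.1] at this
          omega
        · rw [List.getD_eq_default _ _ hi]
          omega⟩ : Fin (n+1))) : Bool × (Fin K → Fin (n+1))))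
  rintro ⟨w1, hw1, ha1⟩ ⟨w2, hw2, ha2⟩ heq
  simp only [Prod.mk.injEq, Subtype.mk.injEq] at heq ⊢
  obtain ⟨hh, hfun⟩ := heq
  have hne1 : w1 ≠ [] := fun h0 => by rw [h0] at hw1; simp at hw1; omega
  have hne2 : w2 ≠ [] := fun h0 => by rw [h0] at hw2; simp at hw2; omega
  have hL1 : (dOf w1).length ≤ K := by
    have := dOf_length ha1 hne1
    rw [hw1] at this
    omega
  have hL2 : (dOf w2).length ≤ K := by
    have := dOf_length ha2 hne2
    rw [hw2] at this
    omega
  have hd : dOf w1 = dOf w2 := by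
    apply getD_ext hL1 hL2 (dOf_pos w1) (dOf_pos w2)
    intro i hi
    have := congrFun hfun ⟨i, hi⟩
    simpa using this
  exact dOf_inj (by rw [hw1, hw2]) hh hd


/-- `c(n)` grows subexponentially: for every `α > 1`, `c(n)/αⁿ → 0`. -/
theorem stmt11 (α : ℝ) (hα : 1 < α) :
    Filter.Tendsto (fun n : ℕ => (c n : ℝ) / α ^ n) Filter.atTop (nhds 0) := by
  have hα0 : 0 < α := lt_trans one_pos hα
  have hlogα : 0 < Real.log α := Real.log_pos hα
  set K : ℕ → ℕ := fun n => 2 * Nat.sqrt (2 * n) + 1 with hK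
  set E : ℕ → ℝ := fun n => Real.log 2 + (K n : ℝ) * Real.log (n+1) - n * Real.log α with hE
  -- step 1 : c n / α ^ n ≤ exp (E n) for n ≥ 1
  have step1 : ∀ n : ℕ, 1 ≤ n → (c n : ℝ) / α ^ n ≤ Real.exp (E n) := by
    intro n hn
    have hb := c_le n hn
    have hb' : (c n : ℝ) ≤ 2 * ((n:ℝ) + 1) ^ (K n) := by
      calc (c n : ℝ) ≤ ((2 * (n + 1) ^ (K n) : ℕ) : ℝ) := by exact_mod_cast hb
        _ = 2 * ((n:ℝ) + 1) ^ (K n) := by push_cast; ring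
    have hexp : Real.exp (E n) = 2 * ((n:ℝ)+1) ^ (K n) / α ^ n := by
      rw [hE]
      simp only
      rw [sub_eq_add_neg, Real.exp_add, Real.exp_add, Real.exp_log two_pos]
      rw [← Real.log_pow, Real.exp_log (by positivity)]
      rw [← Real.log_pow, Real.exp_neg, Real.exp_log (by positivity)]
      ring
    rw [hexp]
    apply div_le_div_of_nonneg_right hb' (by positivity)
  -- step 2 : K n ≤ 8 √(n+1)
  have step2 : ∀ n : ℕ, (K n : ℝ) ≤ 8 * Real.sqrt ((n:ℝ)+1) := by
    intro n
    have h1 : ((Nat.sqrt (2*n) : ℕ) : ℝ) ≤ Real.sqrt ((2*n : ℕ) : ℝ) := by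
      rw [show ((2*n:ℕ):ℝ) = (((2*n) : ℕ) : ℝ) from rfl]
      apply Real.le_sqrt (by positivity) (by positivity) |>.mpr
      exact_mod_cast Nat.sqrt_le' (2*n)
    have h2 : Real.sqrt ((2*n : ℕ) : ℝ) ≤ 2 * Real.sqrt ((n:ℝ)+1) := by
      rw [show (2 : ℝ) * Real.sqrt ((n:ℝ)+1) = Real.sqrt 4 * Real.sqrt ((n:ℝ)+1) by
        rw [show (4:ℝ) = 2^2 by norm_num, Real.sqrt_sq (by norm_num)]]
      rw [← Real.sqrt_mul (by norm_num)]
      apply Real.sqrt_le_sqrt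
      push_cast
      nlinarith
    have h3 : (1:ℝ) ≤ Real.sqrt ((n:ℝ)+1) :=
      (Real.le_sqrt (by norm_num) (by positivity)).mpr
        (by nlinarith [Nat.cast_nonneg (α := ℝ) n])
    have : (K n : ℝ) = 2 * ((Nat.sqrt (2*n) : ℕ) : ℝ) + 1 := by
      rw [hK]; push_cast; ring
    rw [this]
    nlinarith
  -- step 3 : E tends to -∞
  have step3 : Filter.Tendsto E Filter.atTop Filter.atBot := by
    -- little-o : log x ≤ (log α / 16) √x eventually
    have hlo := isLittleO_log_rpow_atTop (one_half_pos)
    have hev : ∀ᶠ x : ℝ in Filter.atTop,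
        Real.log x ≤ (Real.log α / 16) * Real.sqrt x := by
      have := hlo.def (show (0:ℝ) < Real.log α / 16 by positivity)
      filter_upwards [this, Filter.eventually_ge_atTop (1:ℝ)] with x hx hx1
      have hx0 : (0:ℝ) ≤ x := by linarith
      have hs : x ^ ((1:ℝ)/2) = Real.sqrt x := (Real.sqrt_eq_rpow x).symm
      calc Real.log x ≤ ‖Real.log x‖ := le_abs_self _
        _ ≤ Real.log α / 16 * ‖x ^ ((1:ℝ)/2)‖ := hx
        _ = Real.log α / 16 * Real.sqrt x := by
            rw [Real.norm_eq_abs, abs_of_nonneg (Real.rpow_nonneg hx0 _), hs]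
    have hns : Filter.Tendsto (fun n : ℕ => ((n:ℝ)+1)) Filter.atTop Filter.atTop :=
      Filter.tendsto_atTop_add_const_right _ 1 tendsto_natCast_atTop_atTop
    have hev' : ∀ᶠ n : ℕ in Filter.atTop,
        Real.log ((n:ℝ)+1) ≤ Real.log α / 16 * Real.sqrt ((n:ℝ)+1) :=
      hns.eventually hev
    have Ebound : ∀ᶠ n : ℕ in Filter.atTop,
        E n ≤ (Real.log 2 + Real.log α / 2) - (Real.log α / 2) * n := by
      filter_upwards [hev'] with n hn
      have hsq : Real.sqrt ((n:ℝ)+1) * Real.sqrt ((n:ℝ)+1) = (n:ℝ)+1 :=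
        Real.mul_self_sqrt (by positivity)
      have hlognn : 0 ≤ Real.log ((n:ℝ)+1) :=
        Real.log_nonneg (by linarith [Nat.cast_nonneg (α := ℝ) n])
      have h1 : (K n : ℝ) * Real.log ((n:ℝ)+1) ≤
          8 * Real.sqrt ((n:ℝ)+1) * Real.log ((n:ℝ)+1) :=
        mul_le_mul_of_nonneg_right (step2 n) hlognn
      have h2 : 8 * Real.sqrt ((n:ℝ)+1) * Real.log ((n:ℝ)+1) ≤
          8 * Real.sqrt ((n:ℝ)+1) * (Real.log α / 16 * Real.sqrt ((n:ℝ)+1)) := by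
        apply mul_le_mul_of_nonneg_left hn
        positivity
      have h3 : 8 * Real.sqrt ((n:ℝ)+1) * (Real.log α / 16 * Real.sqrt ((n:ℝ)+1))
          = (Real.log α / 2) * ((n:ℝ)+1) := by
        rw [show 8 * Real.sqrt ((n:ℝ)+1) * (Real.log α / 16 * Real.sqrt ((n:ℝ)+1))
          = (Real.log α / 2) * (Real.sqrt ((n:ℝ)+1) * Real.sqrt ((n:ℝ)+1)) by ring, hsq]
      rw [hE]
      simp only
      nlinarith [h1, h2, h3]
    have hG : Filter.Tendsto
        (fun n : ℕ => (Real.log 2 + Real.log α / 2) - (Real.log α / 2) * n)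
        Filter.atTop Filter.atBot := by
      have hmul : Filter.Tendsto (fun n : ℕ => (Real.log α / 2) * (n:ℝ))
          Filter.atTop Filter.atTop :=
        Filter.Tendsto.const_mul_atTop (by positivity) tendsto_natCast_atTop_atTop
      have hneg : Filter.Tendsto (fun n : ℕ => -((Real.log α / 2) * (n:ℝ)))
          Filter.atTop Filter.atBot := by
        exact Filter.tendsto_neg_atTop_atBot.comp hmul
      have := Filter.tendsto_atBot_add_const_left Filter.atTop
        (Real.log 2 + Real.log α / 2) hneg
      simpa [sub_eq_add_neg] using this
    exact Filter.tendsto_atBot_mono' _ Ebound hG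
  -- conclusion
  have hexp0 : Filter.Tendsto (fun n : ℕ => Real.exp (E n)) Filter.atTop (nhds 0) :=
    Real.tendsto_exp_atBot.comp step3
  apply squeeze_zero' (Filter.Eventually.of_forall fun n => by positivity)
    (by filter_upwards [Filter.eventually_ge_atTop 1] with n hn; exact step1 n hn)
    hexp0
end

section
/- For i, j, k, ℓ ≥ 1, the word (01)^i (10)^j (01)^k (10)^ℓ avoids the pattern xx^Rx if and only if (i < j or k < j) and (j < k or ℓ < k). -/
lemma w01_succ (n : ℕ) : w01 (n+1) = false :: true :: w01 n := by
  simp [w01, List.replicate_succ]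

lemma w10_succ (n : ℕ) : w10 (n+1) = true :: false :: w10 n := by
  simp [w10, List.replicate_succ]

lemma w01_add (a b : ℕ) : w01 (a+b) = w01 a ++ w01 b := by
  unfold w01; rw [List.replicate_add, List.flatten_append]

lemma w10_add (a b : ℕ) : w10 (a+b) = w10 a ++ w10 b := by
  unfold w10; rw [List.replicate_add, List.flatten_append]

lemma length_w01 (n : ℕ) : (w01 n).length = 2*n := by
  induction n with
  | zero => simp [w01]
  | succ n ih => rw [w01_succ]; simp [ih]; omega

lemma length_w10 (n : ℕ) : (w10 n).length = 2*n := by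
  induction n with
  | zero => simp [w10]
  | succ n ih => rw [w10_succ]; simp [ih]; omega

lemma reverse_w01 (n : ℕ) : (w01 n).reverse = w10 n := by
  induction n with
  | zero => simp [w01, w10]
  | succ n ih =>
    have h10 : w10 (n+1) = w10 n ++ [true, false] := by
      rw [w10_add n 1]; rfl
    rw [w01_succ, h10]
    simp [ih]

lemma reverse_w10 (n : ℕ) : (w10 n).reverse = w01 n := by
  rw [← reverse_w01, List.reverse_reverse]

lemma getD_w01 : ∀ (n p : ℕ), p < 2*n → (w01 n).getD p false = decide (p % 2 = 1)
  | 0, p, h => by omega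
  | n+1, 0, h => by rw [w01_succ]; simp
  | n+1, 1, h => by rw [w01_succ]; simp
  | n+1, (p+2), h => by
    rw [w01_succ]
    simp only [List.getD_cons_succ]
    rw [getD_w01 n p (by omega), show (p+2) % 2 = p % 2 from Nat.add_mod_right p 2]

lemma getD_w10 : ∀ (n p : ℕ), p < 2*n → (w10 n).getD p false = decide (p % 2 = 0)
  | 0, p, h => by omega
  | n+1, 0, h => by rw [w10_succ]; simp
  | n+1, 1, h => by rw [w10_succ]; simp
  | n+1, (p+2), h => by
    rw [w10_succ]
    simp only [List.getD_cons_succ]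
    rw [getD_w10 n p (by omega), show (p+2) % 2 = p % 2 from Nat.add_mod_right p 2]

/-- The letter of `(01)^i (10)^j (01)^k (10)^l` at position `p`. -/
def Wf (i j k l p : ℕ) : Bool :=
  if (2*i ≤ p ∧ p < 2*(i+j)) ∨ 2*(i+j+k) ≤ p then decide (p % 2 = 0)
  else decide (p % 2 = 1)

lemma getW (i j k l p : ℕ) (hp : p < 2*(i+j+k+l)) :
    (w01 i ++ w10 j ++ w01 k ++ w10 l).getD p false = Wf i j k l p := by
  have lA : (w01 i ++ w10 j ++ w01 k).length = 2*(i+j+k) := by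
    simp [length_w01, length_w10]; ring
  have lB : (w01 i ++ w10 j).length = 2*(i+j) := by
    simp [length_w01, length_w10]; ring
  have lC : (w01 i).length = 2*i := length_w01 i
  rcases lt_or_ge p (2*i) with h1 | h1
  · rw [List.getD_append _ _ _ _ (by omega), List.getD_append _ _ _ _ (by omega),
      List.getD_append _ _ _ _ (by omega), getD_w01 i p h1, Wf, if_neg (by omega)]
  rcases lt_or_ge p (2*(i+j)) with h2 | h2
  · rw [List.getD_append _ _ _ _ (by omega), List.getD_append _ _ _ _ (by omega),
      List.getD_append_right _ _ _ _ (by omega), lC,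
      getD_w10 j (p - 2*i) (by omega), Wf, if_pos (by omega)]
    rw [decide_eq_decide]; omega
  rcases lt_or_ge p (2*(i+j+k)) with h3 | h3
  · rw [List.getD_append _ _ _ _ (by omega), List.getD_append_right _ _ _ _ (by omega), lB,
      getD_w01 k (p - 2*(i+j)) (by omega), Wf, if_neg (by omega)]
    rw [decide_eq_decide]; omega
  · rw [List.getD_append_right _ _ _ _ (by omega), lA,
      getD_w10 l (p - 2*(i+j+k)) (by omega), Wf, if_pos (by omega)]
    rw [decide_eq_decide]; omega

lemma defect_iff (i j k l : ℕ) (hi : 1 ≤ i) (hj : 1 ≤ j) (hk : 1 ≤ k) (hl : 1 ≤ l) (q : ℕ) :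
    Wf i j k l q = Wf i j k l (q+1) ↔
      (q+1 = 2*i ∨ q+1 = 2*(i+j) ∨ q+1 = 2*(i+j+k)) := by
  unfold Wf
  by_cases hA : (2*i ≤ q ∧ q < 2*(i+j)) ∨ 2*(i+j+k) ≤ q <;>
    by_cases hB : (2*i ≤ q+1 ∧ q+1 < 2*(i+j)) ∨ 2*(i+j+k) ≤ q+1 <;>
      simp only [if_pos, if_neg, hA, hB, ite_true, ite_false, decide_eq_decide] <;> omega

lemma infix_index {mid w : List Bool} (h : mid <:+: w) :
    ∃ p, p + mid.length ≤ w.length ∧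
      ∀ r < mid.length, mid.getD r false = w.getD (p+r) false := by
  obtain ⟨s, t, rfl⟩ := h
  refine ⟨s.length, by simp, fun r hr => ?_⟩
  rw [List.append_assoc, List.getD_append_right _ _ _ _ (by omega),
    Nat.add_sub_cancel_left, List.getD_append _ _ _ _ hr]

lemma getD_triple1 (u : List Bool) {r : ℕ} (h : r < u.length) :
    (u ++ u.reverse ++ u).getD r false = u.getD r false := by
  rw [List.getD_append _ _ _ _ (by simp; omega), List.getD_append _ _ _ _ h]

lemma getD_triple2 (u : List Bool) {r : ℕ} (h1 : u.length ≤ r) (h2 : r < 2*u.length) :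
    (u ++ u.reverse ++ u).getD r false = u.getD (2*u.length - 1 - r) false := by
  rw [List.getD_append _ _ _ _ (by simp; omega),
    List.getD_append_right _ _ _ _ h1,
    List.getD_eq_getElem _ _ (by simp; omega), List.getElem_reverse,
    List.getD_eq_getElem _ _ (by omega)]
  congr 1
  omega

lemma getD_triple3 (u : List Bool) {r : ℕ} (h1 : 2*u.length ≤ r) (h2 : r < 3*u.length) :
    (u ++ u.reverse ++ u).getD r false = u.getD (r - 2*u.length) false := by
  rw [List.getD_append_right _ _ _ _ (by simp; omega)]
  congr 1
  simp; omega

lemma w01_ne (n : ℕ) (h : 1 ≤ n) : w01 n ≠ [] := by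
  intro he
  have := congrArg List.length he
  rw [length_w01] at this
  simp at this; omega

lemma w10_ne (n : ℕ) (h : 1 ≤ n) : w10 n ≠ [] := by
  intro he
  have := congrArg List.length he
  rw [length_w10] at this
  simp at this; omega


/-- For `i,j,k,ℓ ≥ 1`, the word `(01)^i (10)^j (01)^k (10)^ℓ` avoids `x xᴿ x` iff
`(i<j ∨ k<j)` and `(j<k ∨ ℓ<k)`. -/
theorem stmt13 (i j k l : ℕ) (hi : 1 ≤ i) (hj : 1 ≤ j) (hk : 1 ≤ k) (hl : 1 ≤ l) :
    AvoidsP (w01 i ++ w10 j ++ w01 k ++ w10 l) ↔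
      ((i < j ∨ k < j) ∧ (j < k ∨ l < k)) := by
  constructor
  · intro hA
    constructor
    · by_contra hcon
      push_neg at hcon
      obtain ⟨hji, hjk⟩ := hcon
      apply hA
      refine ⟨w01 j, w01_ne j hj, w01 (i-j), w01 (k-j) ++ w10 l, ?_⟩
      rw [reverse_w01]
      have e1 : w01 i = w01 (i-j) ++ w01 j := by
        rw [← w01_add]; congr 1; omega
      have e2 : w01 k = w01 j ++ w01 (k-j) := by
        rw [← w01_add]; congr 1; omega
      rw [e1, e2]
      simp only [List.append_assoc]
    · by_contra hcon
      push_neg at hcon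
      obtain ⟨hkj, hkl⟩ := hcon
      apply hA
      refine ⟨w10 k, w10_ne k hk, w01 i ++ w10 (j-k), w10 (l-k), ?_⟩
      rw [reverse_w10]
      have e1 : w10 j = w10 (j-k) ++ w10 k := by
        rw [← w10_add]; congr 1; omega
      have e2 : w10 l = w10 k ++ w10 (l-k) := by
        rw [← w10_add]; congr 1; omega
      rw [e1, e2]
      simp only [List.append_assoc]
  · rintro ⟨h1, h2⟩ ⟨u, hu, hinf⟩
    set m := u.length with hmdef
    have hm1 : 1 ≤ m := List.length_pos_iff.mpr hu
    obtain ⟨p, hlen, hget⟩ := infix_index hinf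
    have hTlen : (u ++ u.reverse ++ u).length = 3*m := by
      simp [← hmdef]; omega
    have hwlen : (w01 i ++ w10 j ++ w01 k ++ w10 l).length = 2*(i+j+k+l) := by
      simp [length_w01, length_w10]; ring
    rw [hTlen, hwlen] at hlen
    -- the three index equations
    have e1 : ∀ r < m, u.getD r false = Wf i j k l (p+r) := by
      intro r hr
      rw [← getD_triple1 u hr, hget r (by omega), getW i j k l (p+r) (by omega)]
    have e2 : ∀ r, m ≤ r → r < 2*m → u.getD (2*m-1-r) false = Wf i j k l (p+r) := by
      intro r hr1 hr2
      rw [← getD_triple2 u hr1 hr2, hget r (by omega), getW i j k l (p+r) (by omega)]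
    have e3 : ∀ r, 2*m ≤ r → r < 3*m → u.getD (r-2*m) false = Wf i j k l (p+r) := by
      intro r hr1 hr2
      rw [← getD_triple3 u hr1 hr2, hget r (by omega), getW i j k l (p+r) (by omega)]
    obtain ⟨s, hs⟩ : ∃ s, m = s + 1 := ⟨m-1, by omega⟩
    -- first junction defect : positions p+m-1, p+m
    have d1 : Wf i j k l (p+s) = Wf i j k l (p+s+1) := by
      have a1 := e1 s (by omega)
      have a2 := e2 m (le_refl m) (by omega)
      rw [show 2*m-1-m = s by omega] at a2
      rw [show p + m = p+s+1 by omega] at a2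
      rw [← a1, ← a2]
    -- second junction defect : positions p+2m-1, p+2m
    have d2 : Wf i j k l (p+m+s) = Wf i j k l (p+m+s+1) := by
      have a1 := e2 (2*m-1) (by omega) (by omega)
      have a2 := e3 (2*m) (le_refl _) (by omega)
      rw [show 2*m-1-(2*m-1) = 0 by omega, show p + (2*m-1) = p+m+s by omega] at a1
      rw [show 2*m-2*m = 0 by omega, show p + 2*m = p+m+s+1 by omega] at a2
      rw [← a1, ← a2]
    have hB1 := (defect_iff i j k l hi hj hk hl (p+s)).mp d1
    have hB2 := (defect_iff i j k l hi hj hk hl (p+m+s)).mp d2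
    rw [show p+s+1 = p+m by omega] at hB1
    rw [show p+m+s+1 = p+2*m by omega] at hB2
    -- alternation of u coming from the first copy (cases A and C)
    have altFirst : p + m ≤ 2*i → ∀ r, r+1 < m → u.getD r false ≠ u.getD (r+1) false := by
      intro hpm r hr hEq
      rw [e1 r (by omega), e1 (r+1) (by omega), show p+(r+1) = (p+r)+1 by omega] at hEq
      have := (defect_iff i j k l hi hj hk hl (p+r)).mp hEq
      omega
    -- alternation of u coming from the second copy (case B)
    have altSecond : p + m = 2*(i+j) → p + 2*m = 2*(i+j+k) →
        ∀ r, r+1 < m → u.getD r false ≠ u.getD (r+1) false := by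
      intro hc1 hc2 r hr hEq
      have a1 := e2 (2*m-2-r) (by omega) (by omega)
      have a2 := e2 (2*m-1-r) (by omega) (by omega)
      rw [show 2*m-1-(2*m-2-r) = r+1 by omega] at a1
      rw [show 2*m-1-(2*m-1-r) = r by omega] at a2
      rw [show p+(2*m-1-r) = (p+(2*m-2-r))+1 by omega] at a2
      rw [a1, a2] at hEq
      have := (defect_iff i j k l hi hj hk hl (p+(2*m-2-r))).mp hEq.symm
      omega
    rcases hB1 with c1 | c1 | c1 <;> rcases hB2 with c2 | c2 | c2
    -- case (2i, 2i) impossible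
    · omega
    -- case A : p+m = 2i, p+2m = 2(i+j), so m = 2j, i ≥ j, hence k < j
    · have hkj : k < j := by rcases h1 with h | h <;> omega
      have hm2j : m = 2*j := by omega
      have a1 := e3 (2*m+2*k-1) (by omega) (by omega)
      have a2 := e3 (2*m+2*k) (by omega) (by omega)
      rw [show 2*m+2*k-1-2*m = 2*k-1 by omega] at a1
      rw [show 2*m+2*k-2*m = 2*k by omega] at a2
      rw [show p+(2*m+2*k) = (p+(2*m+2*k-1))+1 by omega] at a2
      have hd : Wf i j k l (p+(2*m+2*k-1)) = Wf i j k l ((p+(2*m+2*k-1))+1) := by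
        apply (defect_iff i j k l hi hj hk hl _).mpr
        omega
      exact altFirst (by omega) (2*k-1) (by omega)
        (by rw [show 2*k-1+1 = 2*k by omega, a1, a2, hd])
    -- case C : p+m = 2i, p+2m = 2(i+j+k), so m = 2(j+k)
    · have a1 := e2 (m+2*j-1) (by omega) (by omega)
      have a2 := e2 (m+2*j) (by omega) (by omega)
      rw [show 2*m-1-(m+2*j-1) = 2*k by omega] at a1
      rw [show 2*m-1-(m+2*j) = 2*k-1 by omega] at a2
      rw [show p+(m+2*j) = (p+(m+2*j-1))+1 by omega] at a2
      have hd : Wf i j k l (p+(m+2*j-1)) = Wf i j k l ((p+(m+2*j-1))+1) := by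
        apply (defect_iff i j k l hi hj hk hl _).mpr
        omega
      exact altFirst (by omega) (2*k-1) (by omega)
        (by rw [show 2*k-1+1 = 2*k by omega, a2, ← hd, ← a1])
    -- impossible orderings
    · omega
    · omega
    -- case B : p+m = 2(i+j), p+2m = 2(i+j+k), so m = 2k
    · rcases h2 with hjk | hlk
      · -- j < k : defect of w at 2i-1 lands in the first copy of u
        have a1 := e1 (2*k-2*j-1) (by omega)
        have a2 := e1 (2*k-2*j) (by omega)
        rw [show p+(2*k-2*j) = (p+(2*k-2*j-1))+1 by omega] at a2
        have hd : Wf i j k l (p+(2*k-2*j-1)) = Wf i j k l ((p+(2*k-2*j-1))+1) := by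
          apply (defect_iff i j k l hi hj hk hl _).mpr
          omega
        exact altSecond c1 c2 (2*k-2*j-1) (by omega)
          (by rw [show 2*k-2*j-1+1 = 2*k-2*j by omega, a1, a2, hd])
      · -- l < k : the word is too short
        omega
    · omega
    · omega
    · omega
end

section
/- The number of Type 2 sequences of weight n equals the number of pairs (λ, μ) of partitions into distinct parts with |λ| + |μ| = n and max(λ) = max(μ); and ũ(n) = 2·(number of Type 1 sequences of weight n) + (number of Type 2 sequences of weight n). -/
/-!
Listing `λ` increasingly followed by `μ` decreasingly sends a pair of strict partitions to a
sequence of the same weight. When `max μ ≤ max λ` no part of `μ` can continue the increasing run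
of `λ`, so the split point, and with it the pair, is recovered from the sequence. On such pairs
the map is therefore injective, and it sends the pairs with `max λ = max μ` onto the Type 2
sequences and those with `max μ < max λ` onto the Type 1 sequences. The pairs with
`max λ < max μ` are counted by swapping `λ` and `μ`.
-/

open Finset

namespace UnimodalSeq

variable {α : Type*}

theorem isChain_take_iff_getD {R : α → α → Prop} {l : List α} {x : α} {k : ℕ}
    (hk : k ≤ l.length) :
    (l.take k).IsChain R ↔ ∀ i, i + 1 < k → R (l.getD i x) (l.getD (i + 1) x) := by
  simp only [List.isChain_iff_getElem, List.length_take, List.getElem_take]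
  refine forall_congr' fun i => ⟨fun h hi => ?_, fun h hi => ?_⟩
  · rw [List.getD_eq_getElem _ _ (by omega), List.getD_eq_getElem _ _ (by omega)]
    exact h (by omega)
  · have := h (by omega)
    rwa [List.getD_eq_getElem _ _ (by omega), List.getD_eq_getElem _ _ (by omega)] at this

theorem isChain_drop_iff_getD {R : α → α → Prop} {l : List α} {x : α} {k : ℕ} :
    (l.drop k).IsChain R ↔ ∀ i, k ≤ i → i + 1 < l.length → R (l.getD i x) (l.getD (i + 1) x) := by
  simp only [List.isChain_iff_getElem, List.length_drop, List.getElem_drop]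
  constructor
  · intro h i hki hi
    have := h (i - k) (by omega)
    rw [List.getD_eq_getElem _ _ (by omega), List.getD_eq_getElem _ _ hi]
    simpa [Nat.add_sub_cancel' hki, show k + (i - k + 1) = i + 1 by omega] using this
  · intro h i hi
    have := h (k + i) (by omega) (by omega)
    rwa [List.getD_eq_getElem _ _ (by omega), List.getD_eq_getElem _ _ (by omega)] at this

theorem take_length_add_one_append_cons (a b : List α) (m : α) :
    (a ++ m :: b).take (a.length + 1) = a ++ [m] := by
  simp [List.take_append]

theorem type1_iff_exists_append {d : List ℕ} : Type1 d ↔ (∀ x ∈ d, 0 < x) ∧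
    ∃ a m b, d = a ++ m :: b ∧ (a ++ [m]).SortedLT ∧ (m :: b).SortedGT := by
  simp only [Type1, List.sortedLT_iff_isChain, List.sortedGT_iff_isChain]
  refine and_congr_right fun _ => ⟨?_, ?_⟩
  · rintro ⟨-, j, hj, hinc, hdec⟩
    refine ⟨d.take j, d[j], d.drop (j + 1), ?_, ?_, ?_⟩
    · rw [← List.drop_eq_getElem_cons hj, List.take_append_drop]
    · rw [← List.take_succ_eq_append_getElem hj]
      exact (isChain_take_iff_getD (by omega)).2 fun i hi => hinc i (by omega)
    · rw [← List.drop_eq_getElem_cons hj]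
      exact isChain_drop_iff_getD.2 hdec
  · rintro ⟨a, m, b, rfl, hinc, hdec⟩
    have hlen : (a ++ m :: b).length = a.length + b.length + 1 := by simp; omega
    refine ⟨by simp, a.length, by omega, fun i hi => ?_, fun i hi hl => ?_⟩
    · rw [← take_length_add_one_append_cons a b m] at hinc
      exact (isChain_take_iff_getD (by omega)).1 hinc i (by omega)
    · rw [← List.drop_left (l₂ := m :: b)] at hdec
      exact isChain_drop_iff_getD.1 hdec i hi hl

theorem type2_iff_exists_append {d : List ℕ} : Type2 d ↔ (∀ x ∈ d, 0 < x) ∧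
    ∃ a m b, d = a ++ m :: m :: b ∧ (a ++ [m]).SortedLT ∧ (m :: b).SortedGT := by
  simp only [Type2, List.sortedLT_iff_isChain, List.sortedGT_iff_isChain]
  refine and_congr_right fun _ => ⟨?_, ?_⟩
  · rintro ⟨_ | k, hk, hj, heq, hinc, hdec⟩
    · omega
    simp only [Nat.add_sub_cancel] at heq hinc
    rw [List.getD_eq_getElem _ _ (by omega), List.getD_eq_getElem _ _ hj] at heq
    refine ⟨d.take k, d[k], d.drop (k + 2), ?_, ?_, ?_⟩
    · have hdrop : d[k] :: d[k] :: d.drop (k + 2) = d.drop k := by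
        rw [List.drop_eq_getElem_cons (by omega : k < d.length), List.drop_eq_getElem_cons hj, heq]
      rw [hdrop, List.take_append_drop]
    · rw [← List.take_succ_eq_append_getElem (by omega)]
      exact (isChain_take_iff_getD (by omega)).2 fun i hi => hinc i (by omega)
    · rw [heq, ← List.drop_eq_getElem_cons hj]
      exact isChain_drop_iff_getD.2 hdec
  · rintro ⟨a, m, b, rfl, hinc, hdec⟩
    have hlen : (a ++ m :: m :: b).length = a.length + b.length + 2 := by simp; omega
    refine ⟨a.length + 1, by omega, by omega, ?_, fun i hi => ?_, fun i hi hl => ?_⟩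
    · simp
    · rw [← take_length_add_one_append_cons a (m :: b) m] at hinc
      exact (isChain_take_iff_getD (by omega)).1 hinc i (by omega)
    · rw [← List.drop_left (l₁ := a ++ [m]) (l₂ := m :: b), List.append_assoc] at hdec
      exact isChain_drop_iff_getD.1 hdec i (by simpa using hi) hl

theorem sort_ne_nil {s : Finset α} (hs : s.Nonempty) (r : α → α → Prop) [DecidableRel r]
    [IsTrans α r] [Std.Antisymm r] [Std.Total r] : s.sort r ≠ [] := by
  rw [← List.length_pos_iff, length_sort]
  exact hs.card_pos

theorem sum_sort [AddCommMonoid α] (s : Finset α) (r : α → α → Prop) [DecidableRel r]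
    [IsTrans α r] [Std.Antisymm r] [Std.Total r] : (s.sort r).sum = s.sum id := by
  classical
  simpa using (List.sum_toFinset id (s.sort_nodup r)).symm

section LinearOrder

variable [LinearOrder α]

theorem max_eq_of_mem_of_forall_le {s : Finset α} {m : α} (hm : m ∈ s) (h : ∀ x ∈ s, x ≤ m) :
    s.max = m :=
  le_antisymm (Finset.max_le fun x hx => WithBot.coe_le_coe.2 (h x hx)) (le_max hm)

theorem max_lt_coe {s : Finset α} {m : α} (h : ∀ x ∈ s, x < m) : s.max < m :=
  (Finset.sup_lt_iff (WithBot.bot_lt_coe m)).2 fun x hx => WithBot.coe_lt_coe.2 (h x hx)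

theorem max_toFinset_append_singleton {a : List α} {m : α}
    (h : (a ++ [m]).SortedLT) : (a ++ [m]).toFinset.max = m := by
  rw [List.sortedLT_iff_pairwise, List.pairwise_append] at h
  refine max_eq_of_mem_of_forall_le (by simp) fun x hx => ?_
  rcases List.mem_append.1 (List.mem_toFinset.1 hx) with hx | hx
  · exact (h.2.2 x hx m (List.mem_singleton_self m)).le
  · exact (List.mem_singleton.1 hx).le

theorem max_toFinset_cons {b : List α} {m : α} (h : (m :: b).SortedGT) :
    (m :: b).toFinset.max = m := by
  rw [List.sortedGT_iff_pairwise, List.pairwise_cons] at h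
  refine max_eq_of_mem_of_forall_le (by simp) fun x hx => ?_
  rcases List.mem_cons.1 (List.mem_toFinset.1 hx) with rfl | hx
  exacts [le_rfl, (h.1 x hx).le]

theorem max_toFinset_lt_of_sortedGT_cons {b : List α} {m : α}
    (h : (m :: b).SortedGT) : b.toFinset.max < m := by
  rw [List.sortedGT_iff_pairwise, List.pairwise_cons] at h
  exact max_lt_coe fun x hx => h.1 x (List.mem_toFinset.1 hx)

theorem exists_sort_eq_append_singleton {s : Finset α} (hs : s.Nonempty) :
    ∃ (a : List α) (m : α), s.sort = a ++ [m] ∧ s.max = m := by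
  obtain ⟨a, m, h⟩ : ∃ (a : List α) (m : α), s.sort (· ≤ ·) = a ++ [m] :=
    ⟨_, _, (List.dropLast_append_getLast (sort_ne_nil hs (· ≤ ·))).symm⟩
  refine ⟨a, m, h, ?_⟩
  rw [← sort_toFinset s (· ≤ ·), h]
  exact max_toFinset_append_singleton (h ▸ sortedLT_sort s)

theorem exists_sort_ge_eq_cons {t : Finset α} (ht : t.Nonempty) :
    ∃ (m : α) (b : List α), t.sort (· ≥ ·) = m :: b ∧ t.max = m := by
  obtain ⟨m, b, h⟩ := List.exists_cons_of_ne_nil (sort_ne_nil ht (· ≥ ·))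
  refine ⟨m, b, h, ?_⟩
  rw [← sort_toFinset t (· ≥ ·), h]
  exact max_toFinset_cons (h ▸ sortedGT_sort t)

end LinearOrder

def pairSeq (p : Finset ℕ × Finset ℕ) : List ℕ :=
  p.1.sort ++ p.2.sort (· ≥ ·)

theorem sum_pairSeq (p : Finset ℕ × Finset ℕ) : (pairSeq p).sum = p.1.sum id + p.2.sum id := by
  rw [pairSeq, List.sum_append, sum_sort, sum_sort]

theorem pos_of_mem_pairSeq {p : Finset ℕ × Finset ℕ} (h₁ : StrictPartition p.1)
    (h₂ : StrictPartition p.2) : ∀ x ∈ pairSeq p, 0 < x := by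
  intro x hx
  simp only [pairSeq, List.mem_append, mem_sort] at hx
  rcases hx with hx | hx <;> exact Nat.pos_of_ne_zero (by rintro rfl; contradiction)

theorem strictPartition_toFinset {l : List ℕ} (h : ∀ x ∈ l, 0 < x) :
    StrictPartition l.toFinset := fun h0 => (h 0 (List.mem_toFinset.1 h0)).false

theorem pairSeq_toFinset {a b : List ℕ} (ha : a.SortedLT) (hb : b.SortedGT) :
    pairSeq (a.toFinset, b.toFinset) = a ++ b := by
  rw [pairSeq, (List.toFinset_sort _ ha.nodup).2 ha.sortedLE.pairwise,
    (List.toFinset_sort _ hb.nodup).2 hb.sortedGE.pairwise]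

theorem eq_nil_of_sort_eq_append {s t u : Finset ℕ} {c r : List ℕ} (hmax : t.max ≤ s.max)
    (hu : u.sort = s.sort ++ c) (ht : t.sort (· ≥ ·) = c ++ r) : c = [] := by
  refine List.eq_nil_iff_forall_not_mem.2 fun x hx => ?_
  have hxt : x ∈ t := (mem_sort _).1 (ht ▸ List.mem_append_left r hx)
  obtain ⟨y, hy, hxy⟩ := (Finset.le_sup_iff (WithBot.bot_lt_coe x)).1 ((le_max hxt).trans hmax)
  have hyx : y < x := by
    have := sortedLT_sort u
    rw [hu, List.sortedLT_iff_pairwise, List.pairwise_append] at this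
    exact this.2.2 y ((mem_sort _).2 hy) x hx
  exact (WithBot.coe_le_coe.1 hxy).not_gt hyx

theorem pairSeq_injOn : Set.InjOn pairSeq {p | p.2.max ≤ p.1.max} := by
  rintro ⟨s, t⟩ hp ⟨s', t'⟩ hp' h
  obtain ⟨c, hs, ht⟩ | ⟨c, hs, ht⟩ := List.append_eq_append_iff.1 h
  · obtain rfl := eq_nil_of_sort_eq_append hp hs ht
    simpa using And.intro (congrArg List.toFinset hs).symm (congrArg List.toFinset ht)
  · obtain rfl := eq_nil_of_sort_eq_append hp' hs ht
    simpa using And.intro (congrArg List.toFinset hs) (congrArg List.toFinset ht).symm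

theorem type2_pairSeq {s t : Finset ℕ} (hs : StrictPartition s) (ht : StrictPartition t)
    (hne : s.Nonempty) (hmax : s.max = t.max) : Type2 (pairSeq (s, t)) := by
  obtain ⟨a, m, hsort, hm⟩ := exists_sort_eq_append_singleton hne
  have htm : t.max = m := hmax.symm.trans hm
  obtain ⟨m', b, hsort', hm'⟩ := exists_sort_ge_eq_cons ⟨m, mem_of_max htm⟩
  obtain rfl : m = m' := WithBot.coe_injective (htm.symm.trans hm')
  refine type2_iff_exists_append.2 ⟨pos_of_mem_pairSeq hs ht, a, m, b, ?_, hsort ▸ sortedLT_sort s,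
    hsort' ▸ sortedGT_sort t⟩
  simp [pairSeq, hsort, hsort']

theorem exists_pairSeq_eq_of_type2 {d : List ℕ} (h : Type2 d) :
    ∃ s t, StrictPartition s ∧ StrictPartition t ∧ s.Nonempty ∧ s.max = t.max ∧
      pairSeq (s, t) = d := by
  obtain ⟨hpos, a, m, b, rfl, hlt, hgt⟩ := type2_iff_exists_append.1 h
  have hd : a ++ m :: m :: b = a ++ [m] ++ m :: b := by simp
  rw [hd, List.forall_mem_append] at hpos
  exact ⟨(a ++ [m]).toFinset, (m :: b).toFinset, strictPartition_toFinset hpos.1,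
    strictPartition_toFinset hpos.2, ⟨m, by simp⟩,
    (max_toFinset_append_singleton hlt).trans (max_toFinset_cons hgt).symm,
    (pairSeq_toFinset hlt hgt).trans hd.symm⟩

theorem type1_pairSeq {s t : Finset ℕ} (hs : StrictPartition s) (ht : StrictPartition t)
    (hmax : t.max < s.max) : Type1 (pairSeq (s, t)) := by
  have hne : s.Nonempty := by
    rw [Finset.nonempty_iff_ne_empty]
    rintro rfl
    simp at hmax
  obtain ⟨a, m, hsort, hm⟩ := exists_sort_eq_append_singleton hne
  refine type1_iff_exists_append.2 ⟨pos_of_mem_pairSeq hs ht, a, m, t.sort (· ≥ ·), ?_,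
    hsort ▸ sortedLT_sort s, ?_⟩
  · simp [pairSeq, hsort]
  · rw [List.sortedGT_iff_pairwise, List.pairwise_cons, ← List.sortedGT_iff_pairwise]
    refine ⟨fun x hx => ?_, sortedGT_sort t⟩
    exact WithBot.coe_lt_coe.1 (((le_max ((mem_sort _).1 hx)).trans_lt hmax).trans_eq hm)

theorem exists_pairSeq_eq_of_type1 {d : List ℕ} (h : Type1 d) :
    ∃ s t, StrictPartition s ∧ StrictPartition t ∧ t.max < s.max ∧ pairSeq (s, t) = d := by
  obtain ⟨hpos, a, m, b, rfl, hlt, hgt⟩ := type1_iff_exists_append.1 h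
  have hb : b.SortedGT := by
    rw [List.sortedGT_iff_pairwise] at hgt ⊢
    exact hgt.of_cons
  have hd : a ++ m :: b = a ++ [m] ++ b := by simp
  rw [hd, List.forall_mem_append] at hpos
  exact ⟨(a ++ [m]).toFinset, b.toFinset, strictPartition_toFinset hpos.1,
    strictPartition_toFinset hpos.2,
    (max_toFinset_lt_of_sortedGT_cons hgt).trans_eq (max_toFinset_append_singleton hlt).symm,
    (pairSeq_toFinset hlt hb).trans hd.symm⟩

theorem bijOn_pairSeq_type2 {n : ℕ} (hn : 1 ≤ n) :
    Set.BijOn pairSeq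
      {p | StrictPartition p.1 ∧ StrictPartition p.2 ∧ p.1.sum id + p.2.sum id = n ∧
        p.1.max = p.2.max}
      {d | Type2 d ∧ d.sum = n} := by
  refine ⟨?_, pairSeq_injOn.mono fun p hp => hp.2.2.2.ge, ?_⟩
  · rintro ⟨s, t⟩ ⟨hs, ht, hsum, hmax⟩
    have hne : s.Nonempty := by
      rw [Finset.nonempty_iff_ne_empty]
      rintro rfl
      obtain rfl : t = ∅ := Finset.max_eq_bot.1 hmax.symm
      simp at hsum
      omega
    exact ⟨type2_pairSeq hs ht hne hmax, (sum_pairSeq _).trans hsum⟩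
  · rintro d ⟨hd, rfl⟩
    obtain ⟨s, t, hs, ht, -, hmax, rfl⟩ := exists_pairSeq_eq_of_type2 hd
    exact ⟨(s, t), ⟨hs, ht, (sum_pairSeq _).symm, hmax⟩, rfl⟩

theorem bijOn_pairSeq_type1 (n : ℕ) :
    Set.BijOn pairSeq
      {p | StrictPartition p.1 ∧ StrictPartition p.2 ∧ p.1.sum id + p.2.sum id = n ∧
        p.2.max < p.1.max}
      {d | Type1 d ∧ d.sum = n} := by
  refine ⟨?_, pairSeq_injOn.mono fun p hp => hp.2.2.2.le, ?_⟩
  · rintro ⟨s, t⟩ ⟨hs, ht, hsum, hmax⟩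
    exact ⟨type1_pairSeq hs ht hmax, (sum_pairSeq _).trans hsum⟩
  · rintro d ⟨hd, rfl⟩
    obtain ⟨s, t, hs, ht, hmax, rfl⟩ := exists_pairSeq_eq_of_type1 hd
    exact ⟨(s, t), ⟨hs, ht, (sum_pairSeq _).symm, hmax⟩, rfl⟩

theorem finite_setOf_sum_add_sum_eq (n : ℕ) :
    {p : Finset ℕ × Finset ℕ | p.1.sum id + p.2.sum id = n}.Finite := by
  refine ((range (n + 1)).powerset ×ˢ (range (n + 1)).powerset).finite_toSet.subset ?_
  rintro ⟨s, t⟩ (hsum : s.sum id + t.sum id = n)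
  have hle : ∀ u : Finset ℕ, u.sum id ≤ n → u ∈ (range (n + 1)).powerset := fun u hu =>
    mem_powerset.2 fun x hx =>
      mem_range.2 (Nat.lt_succ_of_le ((single_le_sum (f := id) (by simp) hx).trans hu))
  simp only [coe_product, Set.mem_prod, mem_coe]
  exact ⟨hle s (by omega), hle t (by omega)⟩

theorem utilde_eq (n : ℕ) :
    utilde n = Nat.card {p : Finset ℕ × Finset ℕ // StrictPartition p.1 ∧ StrictPartition p.2 ∧
        p.1.sum id + p.2.sum id = n ∧ p.1.max = p.2.max} +
      2 * Nat.card {p : Finset ℕ × Finset ℕ // StrictPartition p.1 ∧ StrictPartition p.2 ∧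
        p.1.sum id + p.2.sum id = n ∧ p.2.max < p.1.max} := by
  set S := {p : Finset ℕ × Finset ℕ | StrictPartition p.1 ∧ StrictPartition p.2 ∧
    p.1.sum id + p.2.sum id = n}
  set E := {p : Finset ℕ × Finset ℕ | StrictPartition p.1 ∧ StrictPartition p.2 ∧
    p.1.sum id + p.2.sum id = n ∧ p.1.max = p.2.max}
  set G := {p : Finset ℕ × Finset ℕ | StrictPartition p.1 ∧ StrictPartition p.2 ∧
    p.1.sum id + p.2.sum id = n ∧ p.2.max < p.1.max}
  have hfin : ∀ Q : Finset ℕ × Finset ℕ → Prop, {p : Finset ℕ × Finset ℕ |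
      StrictPartition p.1 ∧ StrictPartition p.2 ∧ p.1.sum id + p.2.sum id = n ∧ Q p}.Finite :=
    fun Q => (finite_setOf_sum_add_sum_eq n).subset fun p hp => hp.2.2.1
  have hsplit : S = E ∪ G ∪ Prod.swap ⁻¹' G := by
    ext ⟨s, t⟩
    simp only [S, E, G, Set.mem_union, Set.mem_ofPred_eq, Set.mem_preimage, Prod.fst_swap,
      Prod.snd_swap, add_comm (t.sum id)]
    rcases lt_trichotomy s.max t.max with h | h | h
    · simp [h, h.ne, h.not_gt, and_left_comm]
    · simp [h]
    · simp [h, h.ne', h.not_gt]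
  have hEG : Disjoint E G := Set.disjoint_left.2 fun p hE hG => hG.2.2.2.ne' hE.2.2.2
  have hswap : Disjoint (E ∪ G) (Prod.swap ⁻¹' G) := Set.disjoint_left.2 fun p h hG => by
    rcases h with hE | hG'
    exacts [hG.2.2.2.ne hE.2.2.2, hG.2.2.2.not_gt hG'.2.2.2]
  change Nat.card ↥S = Nat.card ↥E + 2 * Nat.card ↥G
  rw [hsplit, Nat.card_coe_set_eq, Nat.card_coe_set_eq, Nat.card_coe_set_eq,
    Set.ncard_union_eq hswap ((hfin _).union (hfin _))
      ((hfin _).preimage Prod.swap_injective.injOn),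
    Set.ncard_union_eq hEG (hfin _) (hfin _),
    Set.ncard_preimage_of_injective_subset_range Prod.swap_injective
      fun p _ => ⟨p.swap, p.swap_swap⟩]
  ring

end UnimodalSeq

/-- For `n ≥ 1`: Type 2 sequences of weight `n` are counted by pairs of strict partitions
of total weight `n` with equal maxima, and `ũ(n) = 2·#Type1 + #Type2`. -/
theorem stmt16 (n : ℕ) (hn : 1 ≤ n) :
    Nat.card {d : List ℕ // Type2 d ∧ d.sum = n} =
      Nat.card {p : Finset ℕ × Finset ℕ //
        StrictPartition p.1 ∧ StrictPartition p.2 ∧ p.1.sum id + p.2.sum id = n ∧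
        p.1.max = p.2.max} ∧
    utilde n = 2 * Nat.card {d : List ℕ // Type1 d ∧ d.sum = n}
                 + Nat.card {d : List ℕ // Type2 d ∧ d.sum = n} := by
  have htype2 := Nat.card_congr (UnimodalSeq.bijOn_pairSeq_type2 hn).equiv
  have htype1 := Nat.card_congr (UnimodalSeq.bijOn_pairSeq_type1 n).equiv
  simp only [Set.coe_ofPred] at htype1 htype2
  refine ⟨htype2.symm, ?_⟩
  rw [UnimodalSeq.utilde_eq, htype1, htype2]
  ring
end
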